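/- arXiv:2602.15292 — 8 statements merged into one kernel-verified Lean document; each statement's English description precedes it below -/
import Mathlib

section
/- Let C = C_{b,D} be an integer Cantor set with elements k_0 < k_1 < ... in increasing order, and write δ = |D|. Then for every i ≥ 0, n ≥ 0, and 0 ≤ j < δ^i, one has k_{δ^i n + j} = b^i k_n + k_j. -/
namespace CantorSS

variable (b : ℕ) (D : Finset ℕ)

/-- The increasing enumeration of the digit set `D`, extended by `0`. -/
noncomputable def s (d : ℕ) : ℕ :=
  if h : d < D.card then D.orderEmbOfFin rfl ⟨d, h⟩ else 0

/-- The candidate enumeration of `C_{b,D}`: read `m` in base `δ` and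
reinterpret the digits through `s` in base `b`. -/
noncomputable def f (m : ℕ) : ℕ :=
  Nat.ofDigits b ((Nat.digits D.card m).map (s D))

variable {b D}

lemma s_mem {d : ℕ} (h : d < D.card) : s D d ∈ D := by
  rw [s, dif_pos h]; exact D.orderEmbOfFin_mem rfl _

lemma s_zero (h0 : 0 ∈ D) (hD : 0 < D.card) : s D 0 = 0 := by
  rw [s, dif_pos hD, Finset.orderEmbOfFin_zero rfl hD]
  exact Nat.le_zero.mp (Finset.min'_le _ _ h0)

lemma s_strictMono {d d' : ℕ} (h : d < d') (h' : d' < D.card) :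
    s D d < s D d' := by
  rw [s, s, dif_pos h', dif_pos (h.trans h')]
  exact (D.orderEmbOfFin rfl).strictMono h

lemma s_ne_zero (h0 : 0 ∈ D) {d : ℕ} (hd : d ≠ 0) (h : d < D.card) :
    s D d ≠ 0 := by
  have := s_strictMono (Nat.pos_of_ne_zero hd) h
  rw [s_zero h0 (by omega)] at this
  omega

lemma f_zero : f b D 0 = 0 := by simp [f]

lemma f_rec (h0 : 0 ∈ D) (hD : 2 ≤ D.card) (q r : ℕ) (hr : r < D.card) :
    f b D (D.card * q + r) = b * f b D q + s D r := by
  rcases Nat.eq_zero_or_pos (D.card * q + r) with h | h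
  · have hq : q = 0 := by
      rcases Nat.eq_zero_or_pos q with h' | h'
      · exact h'
      · nlinarith
    have hr0 : r = 0 := by omega
    simp [hq, hr0, f_zero, s_zero h0 (by omega)]
  · rw [f, Nat.digits_def' (by omega : 1 < D.card) h,
      Nat.mul_add_mod, Nat.mod_eq_of_lt hr, Nat.mul_add_div (by omega),
      Nat.div_eq_of_lt hr, Nat.add_zero, List.map_cons, Nat.ofDigits_cons]
    rw [Nat.add_comm]
    rfl

lemma s_lt_b (hDsub : ∀ d ∈ D, d < b) {d : ℕ} (h : d < D.card) : s D d < b :=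
  hDsub _ (s_mem h)

lemma f_strictMono (hb : 3 ≤ b) (h0 : 0 ∈ D) (hD : 2 ≤ D.card) (hDsub : ∀ d ∈ D, d < b) :
    StrictMono (f b D) := by
  have key : ∀ m', ∀ m, m < m' → f b D m < f b D m' := by
    intro m'
    induction m' using Nat.strong_induction_on with
    | _ m' ih =>
      intro m hm
      have hδ : 0 < D.card := by omega
      have e1 : f b D m = b * f b D (m / D.card) + s D (m % D.card) := by
        conv_lhs => rw [← Nat.div_add_mod m D.card]
        exact f_rec h0 hD _ _ (Nat.mod_lt _ hδ)
      have e2 : f b D m' = b * f b D (m' / D.card) + s D (m' % D.card) := by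
        conv_lhs => rw [← Nat.div_add_mod m' D.card]
        exact f_rec h0 hD _ _ (Nat.mod_lt _ hδ)
      have hq : m / D.card ≤ m' / D.card := Nat.div_le_div_right hm.le
      rcases lt_or_eq_of_le hq with hlt | heq
      · have hm'pos : 0 < m' := by omega
        have hd : m' / D.card < m' := Nat.div_lt_self hm'pos (by omega)
        have hfq : f b D (m / D.card) < f b D (m' / D.card) := ih _ hd _ hlt
        have hs1 : s D (m % D.card) < b := s_lt_b hDsub (Nat.mod_lt _ hδ)
        rw [e1, e2]
        nlinarith [Nat.zero_le (s D (m' % D.card))]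
      · have hr : m % D.card < m' % D.card := by
          have h1 := Nat.div_add_mod m D.card
          have h2 := Nat.div_add_mod m' D.card
          have h3 : D.card * (m / D.card) = D.card * (m' / D.card) := by rw [heq]
          omega
        rw [e1, e2, heq]
        exact Nat.add_lt_add_left (s_strictMono hr (Nat.mod_lt _ hδ)) _
  exact fun m m' h => key m' m h

lemma f_digits (hb : 3 ≤ b) (h0 : 0 ∈ D) (hD : 2 ≤ D.card) (hDsub : ∀ d ∈ D, d < b)
    (m : ℕ) :
    Nat.digits b (f b D m) = (Nat.digits D.card m).map (s D) := by
  apply Nat.digits_ofDigits b (by omega)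
  · intro l hl
    obtain ⟨d, hd, rfl⟩ := List.mem_map.mp hl
    exact s_lt_b hDsub (Nat.digits_lt_base (by omega) hd)
  · intro h
    have hm : m ≠ 0 := by
      rintro rfl; simp at h
    have hne : Nat.digits D.card m ≠ [] := Nat.digits_ne_nil_iff_ne_zero.mpr hm
    rw [List.getLast_map]
    exact s_ne_zero h0 (Nat.getLast_digit_ne_zero _ hm)
      (Nat.digits_lt_base (by omega) (List.getLast_mem hne))

/-- inverse digit map -/
noncomputable def t (D : Finset ℕ) (x : ℕ) : ℕ :=
  if hx : x ∈ D then ((D.orderIsoOfFin rfl).symm ⟨x, hx⟩ : Fin D.card).val else 0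

lemma t_lt (hD : 2 ≤ D.card) (x : ℕ) : t D x < D.card := by
  rw [t]
  split
  · exact Fin.is_lt _
  · omega

lemma s_t {x : ℕ} (hx : x ∈ D) : s D (t D x) = x := by
  rw [t, dif_pos hx, s, dif_pos (Fin.is_lt _)]
  have : (⟨((D.orderIsoOfFin rfl).symm ⟨x, hx⟩ : Fin D.card).val,
      Fin.is_lt _⟩ : Fin D.card) = (D.orderIsoOfFin rfl).symm ⟨x, hx⟩ := rfl
  rw [this, ← Finset.coe_orderIsoOfFin_apply, OrderIso.apply_symm_apply]

lemma f_range (hb : 3 ≤ b) (h0 : 0 ∈ D) (hD : 2 ≤ D.card) (hDsub : ∀ d ∈ D, d < b) :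
    Set.range (f b D) = {m : ℕ | ∀ d ∈ Nat.digits b m, d ∈ D} := by
  ext m
  constructor
  · rintro ⟨x, rfl⟩ d hd
    rw [f_digits hb h0 hD hDsub] at hd
    obtain ⟨d', hd', rfl⟩ := List.mem_map.mp hd
    exact s_mem (Nat.digits_lt_base (by omega) hd')
  · intro hm
    refine ⟨Nat.ofDigits D.card ((Nat.digits b m).map (t D)), ?_⟩
    have hdig : Nat.digits D.card
        (Nat.ofDigits D.card ((Nat.digits b m).map (t D)))
        = (Nat.digits b m).map (t D) := by
      apply Nat.digits_ofDigits _ (by omega)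
      · intro l hl
        obtain ⟨d, hd, rfl⟩ := List.mem_map.mp hl
        exact t_lt hD d
      · intro h
        have hm0 : m ≠ 0 := by rintro rfl; simp at h
        have hne : Nat.digits b m ≠ [] := Nat.digits_ne_nil_iff_ne_zero.mpr hm0
        rw [List.getLast_map]
        intro ht
        have hlast := Nat.getLast_digit_ne_zero b hm0
        have hmem : (Nat.digits b m).getLast hne ∈ D := hm _ (List.getLast_mem hne)
        have := s_t hmem
        rw [ht, s_zero h0 (by omega)] at this
        exact hlast this.symm
    have hmap : (Nat.digits b m).map (s D ∘ t D) = (Nat.digits b m).map id :=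
      List.map_congr_left fun a ha => s_t (hm a ha)
    rw [f, hdig, List.map_map, hmap, List.map_id, Nat.ofDigits_digits]

lemma f_self (h0 : 0 ∈ D) (hD : 2 ≤ D.card) :
    ∀ i n j : ℕ, j < D.card ^ i →
      f b D (D.card ^ i * n + j) = b ^ i * f b D n + f b D j := by
  intro i
  induction i with
  | zero =>
    intro n j hj
    have hj0 : j = 0 := by simpa [Nat.lt_one_iff] using hj
    subst hj0
    simp [f_zero]
  | succ i ih =>
    intro n j hj
    have hδ : 0 < D.card := by omega
    have h2 := Nat.div_add_mod j D.card
    have hj' : j / D.card < D.card ^ i := by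
      apply Nat.div_lt_of_lt_mul
      rw [← pow_succ']
      exact hj
    have hrew : D.card ^ (i + 1) * n + j
        = D.card * (D.card ^ i * n + j / D.card) + j % D.card := by
      rw [Nat.mul_add, ← Nat.mul_assoc, ← pow_succ']
      omega
    rw [hrew, f_rec h0 hD _ _ (Nat.mod_lt _ hδ), ih n (j / D.card) hj']
    conv_rhs => rw [show j = D.card * (j / D.card) + j % D.card by omega,
      f_rec h0 hD _ _ (Nat.mod_lt _ hδ)]
    ring

end CantorSS

/-- For the increasing enumeration `k` of the integer Cantor set `C_{b,D}`
(with `0 ∈ D` and `δ = |D|`), one has `k (δ^i * n + j) = b^i * k n + k j`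
for all `i, n ≥ 0` and `0 ≤ j < δ^i`. -/
theorem cantor_enumeration_selfsimilar
    (b : ℕ) (hb : 3 ≤ b) (D : Finset ℕ) (hD : 2 ≤ D.card) (hDb : D.card < b)
    (hDsub : ∀ d ∈ D, d < b) (h0 : 0 ∈ D)
    (k : ℕ → ℕ) (hk : StrictMono k)
    (hkr : Set.range k = {m : ℕ | ∀ d ∈ Nat.digits b m, d ∈ D})
    (i n j : ℕ) (hj : j < D.card ^ i) :
    k (D.card ^ i * n + j) = b ^ i * k n + k j := by
  have hkf : k = CantorSS.f b D :=
    (hk.range_inj (CantorSS.f_strictMono hb h0 hD hDsub)).mp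
      (hkr.trans (CantorSS.f_range hb h0 hD hDsub).symm)
  rw [hkf]
  exact CantorSS.f_self h0 hD i n j hj
end

section
/- Let C = C_{b,D} be an integer Cantor set with increasing enumeration (k_n) and δ = |D|, and let s_b denote the base-b digit sum. Then for every i ≥ 0, n ≥ 0, and 0 ≤ j < δ^i, one has s_b(k_{δ^i n + j}) = s_b(k_n) + s_b(k_j). -/
/-!
List `D` as `d₀ = 0 < d₁ < ⋯ < d_{δ-1}`. Replacing each base-`δ` digit `t` of `n` by `d_t` and
reading the result in base `b` is strictly increasing (as `d_t < b`) with image `C_{b,D}`, so it is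
the enumeration `k`. Hence the base-`b` digits of `k_n` are the relabelled base-`δ` digits of `n`.
For `j < δ^i`, the base-`δ` digits of `δ^i n + j` are those of `j`, padded with zeros to length `i`,
followed by those of `n`; since `d₀ = 0` the padding contributes nothing to the digit sum.
-/

open Set

def recodeDigits (b δ : ℕ) (a : ℕ → ℕ) (m : ℕ) : ℕ :=
  Nat.ofDigits b ((Nat.digits δ m).map a)

section recodeDigits

variable {b δ : ℕ} {a : ℕ → ℕ}

theorem recodeDigits_add_mul (hδ : 1 < δ) (ha0 : a 0 = 0) {t : ℕ} (ht : t < δ) (m : ℕ) :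
    recodeDigits b δ a (t + δ * m) = a t + b * recodeDigits b δ a m := by
  by_cases h : t = 0 ∧ m = 0
  · obtain ⟨rfl, rfl⟩ := h
    simp [recodeDigits, ha0]
  · rw [recodeDigits, Nat.digits_add δ hδ t m ht (by tauto), List.map_cons, Nat.ofDigits_cons]
    rfl

theorem recodeDigits_eq_mod_add_div (hδ : 1 < δ) (ha0 : a 0 = 0) (m : ℕ) :
    recodeDigits b δ a m = a (m % δ) + b * recodeDigits b δ a (m / δ) := by
  conv_lhs => rw [← Nat.mod_add_div m δ]
  exact recodeDigits_add_mul hδ ha0 (Nat.mod_lt m (by omega)) _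

theorem digits_recodeDigits (hb : 1 < b) (hδ : 1 < δ) (ha0 : a 0 = 0)
    (hamono : StrictMonoOn a (Iio δ)) (hab : ∀ t < δ, a t < b) (m : ℕ) :
    Nat.digits b (recodeDigits b δ a m) = (Nat.digits δ m).map a := by
  refine Nat.digits_ofDigits b hb _ ?_ ?_
  · simp only [List.mem_map]
    rintro _ ⟨t, ht, rfl⟩
    exact hab t (Nat.digits_lt_base hδ ht)
  · intro hne
    have hm : m ≠ 0 := by rintro rfl; simp at hne
    rw [List.getLast_map, ← ha0]
    refine (hamono (show 0 < δ by omega) (Nat.digits_lt_base hδ (List.getLast_mem _)) ?_).ne'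
    exact Nat.pos_of_ne_zero (Nat.getLast_digit_ne_zero δ hm)

theorem strictMono_recodeDigits (hδ : 1 < δ) (ha0 : a 0 = 0) (hamono : StrictMonoOn a (Iio δ))
    (hab : ∀ t < δ, a t < b) : StrictMono (recodeDigits b δ a) := by
  intro m m' hlt
  induction m' using Nat.strong_induction_on generalizing m with
  | _ m' ih =>
    rw [recodeDigits_eq_mod_add_div hδ ha0 m, recodeDigits_eq_mod_add_div hδ ha0 m']
    have hr : m % δ < δ := Nat.mod_lt m (by omega)
    have hr' : m' % δ < δ := Nat.mod_lt m' (by omega)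
    rcases (Nat.div_le_div_right (c := δ) hlt.le).lt_or_eq with hq | hq
    · have hf := ih (m' / δ) (Nat.div_lt_self (by omega) hδ) hq
      have := hab _ hr
      calc a (m % δ) + b * recodeDigits b δ a (m / δ)
          < b * (recodeDigits b δ a (m / δ) + 1) := by rw [mul_add]; omega
        _ ≤ b * recodeDigits b δ a (m' / δ) := Nat.mul_le_mul_left b hf
        _ ≤ _ := Nat.le_add_left _ _
    · have hrlt : m % δ < m' % δ := by
        have e := Nat.mod_add_div m δ
        have e' := Nat.mod_add_div m' δ
        rw [hq] at e
        linarith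
      rw [hq]
      exact Nat.add_lt_add_right (hamono hr hr' hrlt) _

theorem range_recodeDigits (hb : 1 < b) (hδ : 1 < δ) (ha0 : a 0 = 0)
    (hamono : StrictMonoOn a (Iio δ)) (hab : ∀ t < δ, a t < b) :
    range (recodeDigits b δ a) = {c | ∀ d ∈ Nat.digits b c, d ∈ a '' Iio δ} := by
  refine Subset.antisymm ?_ fun c hc => ?_
  · rintro _ ⟨m, rfl⟩ d hd
    rw [digits_recodeDigits hb hδ ha0 hamono hab, List.mem_map] at hd
    obtain ⟨t, ht, rfl⟩ := hd
    exact mem_image_of_mem a (Nat.digits_lt_base hδ ht)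
  induction c using Nat.strong_induction_on with
  | _ c ih =>
    rcases Nat.eq_zero_or_pos c with rfl | hc0
    · exact ⟨0, by simp [recodeDigits]⟩
    rw [mem_ofPred_eq, Nat.digits_def' hb hc0] at hc
    obtain ⟨t, ht, hat⟩ := hc _ List.mem_cons_self
    obtain ⟨m, hm⟩ := ih (c / b) (Nat.div_lt_self hc0 hb) fun d hd => hc d (.tail _ hd)
    refine ⟨t + δ * m, ?_⟩
    rw [recodeDigits_add_mul hδ ha0 ht, hat, hm, Nat.mod_add_div]

end recodeDigits

theorem sum_map_digits_pow_mul_add {M : Type*} [AddCommMonoid M] {a : ℕ → M} (ha0 : a 0 = 0)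
    {δ : ℕ} (hδ : 1 < δ) {i j : ℕ} (hj : j < δ ^ i) (n : ℕ) :
    ((Nat.digits δ (δ ^ i * n + j)).map a).sum
      = ((Nat.digits δ n).map a).sum + ((Nat.digits δ j).map a).sum := by
  rcases Nat.eq_zero_or_pos n with rfl | hn
  · simp
  have hlen := (Nat.digits_length_le_iff hδ j).mpr hj
  rw [add_comm (δ ^ i * n), ← Nat.add_sub_cancel' hlen,
    ← Nat.digits_append_zeroes_append_digits hδ hn]
  simp [ha0, add_comm]

theorem Finset.strictMonoOn_nth_mem (s : Finset ℕ) :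
    StrictMonoOn (Nat.nth (· ∈ s)) (Set.Iio s.card) := by
  have h := Nat.nth_strictMonoOn (p := (· ∈ s)) s.finite_toSet
  rwa [s.finite_toSet_toFinset] at h

theorem Finset.image_nth_mem_Iio_card (s : Finset ℕ) :
    Nat.nth (· ∈ s) '' Set.Iio s.card = s := by
  have h := Nat.image_nth_Iio_card (p := (· ∈ s)) s.finite_toSet
  rwa [s.finite_toSet_toFinset] at h

theorem cantor_digitSum_selfsimilar_general
    (b : ℕ) (hb : 3 ≤ b) (D : Finset ℕ) (hD : 2 ≤ D.card)
    (hDsub : ∀ d ∈ D, d < b) (h0 : 0 ∈ D)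
    (k : ℕ → ℕ) (hk : StrictMono k)
    (hkr : Set.range k = {m : ℕ | ∀ d ∈ Nat.digits b m, d ∈ D})
    (i n j : ℕ) (hj : j < D.card ^ i) :
    (Nat.digits b (k (D.card ^ i * n + j))).sum
      = (Nat.digits b (k n)).sum + (Nat.digits b (k j)).sum := by
  set a := Nat.nth (· ∈ D)
  have hamono : StrictMonoOn a (Iio D.card) := D.strictMonoOn_nth_mem
  have hb1 : 1 < b := by omega
  have hD1 : 1 < D.card := hD
  have ha0 : a 0 = 0 := Nat.nth_zero_of_zero h0
  have hab : ∀ t < D.card, a t < b := fun t ht =>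
    hDsub _ <| D.image_nth_mem_Iio_card.subset (mem_image_of_mem a ht)
  have hk_eq : k = recodeDigits b D.card a := by
    refine (hk.range_inj (strictMono_recodeDigits hD1 ha0 hamono hab)).mp ?_
    rw [hkr, range_recodeDigits hb1 hD1 ha0 hamono hab,
      D.image_nth_mem_Iio_card]
    rfl
  simp only [hk_eq, digits_recodeDigits hb1 hD1 ha0 hamono hab]
  exact sum_map_digits_pow_mul_add ha0 hD1 hj n

/-- For the increasing enumeration `k` of the integer Cantor set `C_{b,D}`
(with `0 ∈ D`, `δ = |D|`) and `s_b` the base-`b` digit sum, one has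
`s_b (k (δ^i * n + j)) = s_b (k n) + s_b (k j)` for all `i, n ≥ 0` and `0 ≤ j < δ^i`. -/
theorem cantor_digitSum_selfsimilar
    (b : ℕ) (hb : 3 ≤ b) (D : Finset ℕ) (hD : 2 ≤ D.card) (hDb : D.card < b)
    (hDsub : ∀ d ∈ D, d < b) (h0 : 0 ∈ D)
    (k : ℕ → ℕ) (hk : StrictMono k)
    (hkr : Set.range k = {m : ℕ | ∀ d ∈ Nat.digits b m, d ∈ D})
    (i n j : ℕ) (hj : j < D.card ^ i) :
    (Nat.digits b (k (D.card ^ i * n + j))).sum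
      = (Nat.digits b (k n)).sum + (Nat.digits b (k j)).sum :=
  cantor_digitSum_selfsimilar_general b hb D hD hDsub h0 k hk hkr i n j hj
end

section
/- Let C = C_{b,D} have increasing enumeration (k_n), δ = |D|, and fix h ≥ 1 and integers k, s ≥ 0. Define Δ = {n ≥ 0 : k_{n+h} − k_n = k and s_b(k_{n+h}) − s_b(k_n) = s}. If j ∈ Δ and i is such that j + h < δ^i, then j + m δ^i ∈ Δ for every m ≥ 0. -/
/-!
If `w` enumerates `D` increasingly, the map sending `n` to the number whose base-`b` digits are
the base-`δ` digits of `n` relabelled through `w` is strictly increasing with range `C_{b,D}`,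
so it is the enumeration `k`. Hence for `n < δ ^ i` we get `k (n + m δ ^ i) = k n + b ^ i k m`
with `k n < b ^ i`, and digit sums add across such a split; both differences defining `Δ` are
therefore unchanged by the shift.
-/

namespace Nat

theorem digits_add_base_pow_mul {b i n m : ℕ} (hb : 1 < b) (hn : n < b ^ i) (hm : 0 < m) :
    digits b (n + b ^ i * m) =
      digits b n ++ List.replicate (i - (digits b n).length) 0 ++ digits b m := by
  have hlen : (digits b n).length ≤ i := (digits_length_le_iff hb n).2 hn
  rw [digits_append_zeroes_append_digits hb hm, Nat.add_sub_cancel' hlen]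

theorem digits_sum_add_base_pow_mul {b i n : ℕ} (hb : 1 < b) (hn : n < b ^ i) (m : ℕ) :
    (digits b (n + b ^ i * m)).sum = (digits b n).sum + (digits b m).sum := by
  rcases m.eq_zero_or_pos with rfl | hm
  · simp
  · simp [digits_add_base_pow_mul hb hn hm]

end Nat

def relabelDigits (b δ : ℕ) (w : ℕ → ℕ) (n : ℕ) : ℕ :=
  Nat.ofDigits b ((Nat.digits δ n).map w)

section relabelDigits

variable {b δ : ℕ} {w : ℕ → ℕ}

@[simp]
theorem relabelDigits_zero : relabelDigits b δ w 0 = 0 := by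
  simp [relabelDigits]

theorem relabelDigits_of_lt (hw0 : w 0 = 0) {r : ℕ} (hr : r < δ) :
    relabelDigits b δ w r = w r := by
  rcases r.eq_zero_or_pos with rfl | hr0
  · simp [hw0]
  · simp [relabelDigits, Nat.digits_of_lt δ r hr0.ne' hr, Nat.ofDigits_singleton]

theorem relabelDigits_add_base_pow_mul (hδ : 1 < δ) (hw0 : w 0 = 0) {i n : ℕ} (hn : n < δ ^ i)
    (m : ℕ) :
    relabelDigits b δ w (n + δ ^ i * m) =
      relabelDigits b δ w n + b ^ i * relabelDigits b δ w m := by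
  rcases m.eq_zero_or_pos with rfl | hm
  · simp
  have hlen : (Nat.digits δ n).length ≤ i := (Nat.digits_length_le_iff hδ n).2 hn
  simp only [relabelDigits, Nat.digits_add_base_pow_mul hδ hn hm, List.map_append,
    List.map_replicate, hw0, Nat.ofDigits_append, Nat.ofDigits_replicate_zero, List.length_append,
    List.length_map, List.length_replicate, Nat.add_sub_cancel' hlen]
  ring

theorem relabelDigits_add_mul (hδ : 1 < δ) (hw0 : w 0 = 0) {r : ℕ} (hr : r < δ) (q : ℕ) :
    relabelDigits b δ w (r + δ * q) = w r + b * relabelDigits b δ w q := by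
  rw [← relabelDigits_of_lt (b := b) hw0 hr]
  simpa using relabelDigits_add_base_pow_mul (b := b) hδ hw0 (i := 1) (by simpa using hr) q

theorem relabelDigits_lt_base_pow (hb : 1 < b) (hδ : 1 < δ) (hwb : ∀ r < δ, w r < b)
    {i n : ℕ} (hn : n < δ ^ i) : relabelDigits b δ w n < b ^ i := by
  have hlen : (Nat.digits δ n).length ≤ i := (Nat.digits_length_le_iff hδ n).2 hn
  calc relabelDigits b δ w n < b ^ ((Nat.digits δ n).map w).length := by
        refine Nat.ofDigits_lt_base_pow_length hb ?_
        simp only [List.mem_map]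
        rintro _ ⟨r, hr, rfl⟩
        exact hwb r (Nat.digits_lt_base hδ hr)
    _ ≤ b ^ i := Nat.pow_le_pow_right (by omega) (by simpa using hlen)

theorem digits_relabelDigits (hb : 1 < b) (hδ : 1 < δ) (hwb : ∀ r < δ, w r < b)
    (hw0 : ∀ r < δ, w r = 0 → r = 0) (n : ℕ) :
    Nat.digits b (relabelDigits b δ w n) = (Nat.digits δ n).map w := by
  refine Nat.digits_ofDigits b hb _ ?_ ?_
  · simp only [List.mem_map]
    rintro _ ⟨r, hr, rfl⟩
    exact hwb r (Nat.digits_lt_base hδ hr)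
  · intro hne
    rw [List.getLast_map]
    have hn : n ≠ 0 := by rintro rfl; simp at hne
    exact fun h => Nat.getLast_digit_ne_zero δ hn
      (hw0 _ (Nat.digits_lt_base hδ (List.getLast_mem _)) h)

theorem relabelDigits_strictMono (hδ : 1 < δ) (hw0 : w 0 = 0) (hwb : ∀ r < δ, w r < b)
    (hw : StrictMonoOn w (Set.Iio δ)) : StrictMono (relabelDigits b δ w) := by
  refine strictMono_nat_of_lt_succ fun n => ?_
  induction n using Nat.strong_induction_on with
  | _ n ih =>
    have hr : n % δ < δ := Nat.mod_lt n (by omega)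
    have hn : n = n % δ + δ * (n / δ) := (Nat.mod_add_div n δ).symm
    rcases Nat.lt_or_ge (n % δ + 1) δ with hr1 | hr1
    · have hn1 : n + 1 = (n % δ + 1) + δ * (n / δ) := by omega
      rw [hn1, relabelDigits_add_mul hδ hw0 hr1]
      conv_lhs => rw [hn, relabelDigits_add_mul hδ hw0 hr]
      have := hw (Set.mem_Iio.2 hr) (Set.mem_Iio.2 hr1) (Nat.lt_succ_self _)
      omega
    · -- the last digit carries over: `n + 1 = δ * (q + 1)` with `q = n / δ < n`
      have hn1 : n + 1 = 0 + δ * (n / δ + 1) := by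
        have := Nat.mod_add_div n δ
        rw [Nat.mul_succ]
        omega
      have hq : n / δ < n := Nat.div_lt_self (by omega) hδ
      rw [hn1, relabelDigits_add_mul hδ hw0 (by omega), hw0]
      conv_lhs => rw [hn, relabelDigits_add_mul hδ hw0 hr]
      have := ih _ hq
      have := hwb _ hr
      nlinarith

theorem range_relabelDigits (hb : 1 < b) (hδ : 1 < δ) (hw0 : w 0 = 0) (hwb : ∀ r < δ, w r < b)
    (hw : StrictMonoOn w (Set.Iio δ)) {D : Set ℕ} (hwD : w '' Set.Iio δ = D) :
    Set.range (relabelDigits b δ w) = {M | ∀ d ∈ Nat.digits b M, d ∈ D} := by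
  ext M
  constructor
  · rintro ⟨n, rfl⟩ d hd
    have hw0' : ∀ r < δ, w r = 0 → r = 0 := fun r hr hr0 => Nat.eq_zero_of_not_pos fun hpos =>
      (hw (Set.mem_Iio.2 (by omega)) hr hpos).ne (hw0.trans hr0.symm)
    rw [digits_relabelDigits hb hδ hwb hw0'] at hd
    obtain ⟨r, hr, rfl⟩ := List.mem_map.1 hd
    exact hwD ▸ Set.mem_image_of_mem w (Set.mem_Iio.2 (Nat.digits_lt_base hδ hr))
  · induction M using Nat.strong_induction_on with
    | _ M ih =>
      intro hM
      rcases M.eq_zero_or_pos with rfl | hMpos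
      · exact ⟨0, relabelDigits_zero⟩
      change ∀ d ∈ Nat.digits b M, d ∈ D at hM
      rw [Nat.digits_def' hb hMpos] at hM
      obtain ⟨r, hr, hrM⟩ := hwD ▸ hM _ List.mem_cons_self
      obtain ⟨q, hq⟩ := ih (M / b) (Nat.div_lt_self hMpos hb)
        fun d hd => hM d (List.mem_cons_of_mem _ hd)
      exact ⟨r + δ * q, by rw [relabelDigits_add_mul hδ hw0 hr, hq, hrM, Nat.mod_add_div]⟩

end relabelDigits

theorem Finset.exists_strictMonoOn_image_eq (D : Finset ℕ) :
    ∃ w : ℕ → ℕ, StrictMonoOn w (Set.Iio D.card) ∧ w '' Set.Iio D.card = D := by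
  refine ⟨fun r => if hr : r < D.card then D.orderEmbOfFin rfl ⟨r, hr⟩ else 0, ?_, ?_⟩
  · intro r hr s hs hrs
    simp only [Set.mem_Iio] at hr hs
    simp only [dif_pos hr, dif_pos hs]
    exact (D.orderEmbOfFin rfl).strictMono (Fin.mk_lt_mk.2 hrs)
  · rw [← D.range_orderEmbOfFin rfl]
    ext d
    simp only [Set.mem_image, Set.mem_Iio, Set.mem_range]
    constructor
    · rintro ⟨r, hr, rfl⟩
      exact ⟨⟨r, hr⟩, by simp [hr]⟩
    · rintro ⟨⟨r, hr⟩, rfl⟩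
      exact ⟨r, hr, by simp [hr]⟩

theorem cantor_difference_set_progression_general
    (b : ℕ) (hb : 3 ≤ b) (D : Finset ℕ) (hD : 2 ≤ D.card)
    (hDsub : ∀ d ∈ D, d < b) (h0 : 0 ∈ D)
    (k : ℕ → ℕ) (hk : StrictMono k)
    (hkr : Set.range k = {m : ℕ | ∀ d ∈ Nat.digits b m, d ∈ D})
    (h K s : ℕ)
    (j i : ℕ) (hji : j + h < D.card ^ i)
    (hjK : k (j + h) = k j + K)
    (hjs : ((Nat.digits b (k (j + h))).sum : ℤ) - (Nat.digits b (k j)).sum = s)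
    (m : ℕ) :
    k (j + m * D.card ^ i + h) = k (j + m * D.card ^ i) + K ∧
    ((Nat.digits b (k (j + m * D.card ^ i + h))).sum : ℤ)
      - (Nat.digits b (k (j + m * D.card ^ i))).sum = s := by
  obtain ⟨w, hw, hwD⟩ := D.exists_strictMonoOn_image_eq
  have hb1 : 1 < b := by omega
  have hδ : 1 < D.card := hD
  have hw0 : w 0 = 0 := by
    rw [← Finset.mem_coe, ← hwD] at h0
    obtain ⟨r, hr, hr0⟩ := h0
    rcases r.eq_zero_or_pos with rfl | hpos
    · exact hr0
    · exact absurd (hw (Set.mem_Iio.2 (by omega)) hr hpos) (by omega)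
  have hwb : ∀ r < D.card, w r < b := fun r hr =>
    hDsub _ <| Finset.mem_coe.1 <| hwD ▸ Set.mem_image_of_mem w (Set.mem_Iio.2 hr)
  obtain rfl : k = relabelDigits b D.card w :=
    hk.range_inj (relabelDigits_strictMono hδ hw0 hwb hw) |>.1 <| by
      rw [hkr, range_relabelDigits hb1 hδ hw0 hwb hw hwD]; rfl
  have hj : j < D.card ^ i := by omega
  rw [add_right_comm, mul_comm m, relabelDigits_add_base_pow_mul hδ hw0 hji,
    relabelDigits_add_base_pow_mul hδ hw0 hj,
    Nat.digits_sum_add_base_pow_mul hb1 (relabelDigits_lt_base_pow hb1 hδ hwb hji),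
    Nat.digits_sum_add_base_pow_mul hb1 (relabelDigits_lt_base_pow hb1 hδ hwb hj)]
  exact ⟨by omega, by omega⟩

/-- Let `k` be the increasing enumeration of the integer Cantor set `C_{b,D}`
(with `0 ∈ D`, `δ = |D|`), `s_b` the base-`b` digit sum, and fix `h ≥ 1` and `K, s ≥ 0`.
If `j` belongs to `Δ = {n : k_{n+h} − k_n = K and s_b(k_{n+h}) − s_b(k_n) = s}` and
`j + h < δ^i`, then `j + m·δ^i ∈ Δ` for every `m ≥ 0`. -/
theorem cantor_difference_set_progression
    (b : ℕ) (hb : 3 ≤ b) (D : Finset ℕ) (hD : 2 ≤ D.card) (hDb : D.card < b)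
    (hDsub : ∀ d ∈ D, d < b) (h0 : 0 ∈ D)
    (k : ℕ → ℕ) (hk : StrictMono k)
    (hkr : Set.range k = {m : ℕ | ∀ d ∈ Nat.digits b m, d ∈ D})
    (h K s : ℕ) (hh : 1 ≤ h)
    (j i : ℕ) (hji : j + h < D.card ^ i)
    (hjK : k (j + h) = k j + K)
    (hjs : ((Nat.digits b (k (j + h))).sum : ℤ) - (Nat.digits b (k j)).sum = s)
    (m : ℕ) :
    k (j + m * D.card ^ i + h) = k (j + m * D.card ^ i) + K ∧
    ((Nat.digits b (k (j + m * D.card ^ i + h))).sum : ℤ)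
      - (Nat.digits b (k (j + m * D.card ^ i))).sum = s :=
  cantor_difference_set_progression_general b hb D hD hDsub h0 k hk hkr h K s j i hji hjK hjs m
end

section
/- Let b ≥ 3, D ⊆ ℤ_b a digit set with 2 ≤ |D| < b, and suppose S ⊆ ℤ_b with |S| > 1 satisfies S − S ⊆ D. If A ⊆ [1, b^n] is a set such that the difference set A − A contains no nonzero element of the Cantor set C_{b,D}, then |A| ≪ (b/|S|)^n. In particular C_{b,D} is intersective with power savings of order log|S|/log b. -/
/-- Membership in the integer Cantor set with base `b` and (possibly negative)
digit set `D ⊆ ℤ`: integers of the form `∑_{j=0}^t d_j b^j` with `d_j ∈ D`. -/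
def IsCantorZ (b : ℕ) (D : Finset ℤ) (m : ℤ) : Prop :=
  ∃ t : ℕ, ∃ f : ℕ → ℤ, (∀ j ≤ t, f j ∈ D) ∧ m = ∑ j ∈ Finset.range (t + 1), f j * (b : ℤ) ^ j

/-- Expansion of a digit sum: split off the 0-th digit. -/
lemma digit_sum_expand (b : ℕ) (n : ℕ) (h : ℕ → ℤ) :
    ∑ j ∈ Finset.range (n + 1), h j * (b : ℤ) ^ j
      = (b : ℤ) * ∑ j ∈ Finset.range n, h (j + 1) * (b : ℤ) ^ j + h 0 := by
  rw [Finset.sum_range_succ', Finset.mul_sum, pow_zero, mul_one]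
  congr 1
  apply Finset.sum_congr rfl
  intro j _
  ring

/-- Uniqueness of digit expansions when digits are distinct mod `b`. -/
lemma digit_unique (b : ℕ) (hb : 2 ≤ b) (S : Finset ℤ)
    (hSres : ∀ s ∈ S, ∀ s' ∈ S, s % (b : ℤ) = s' % (b : ℤ) → s = s') :
    ∀ n : ℕ, ∀ f g : ℕ → ℤ, (∀ j < n, f j ∈ S) → (∀ j < n, g j ∈ S) →
      (∑ j ∈ Finset.range n, f j * (b : ℤ) ^ j = ∑ j ∈ Finset.range n, g j * (b : ℤ) ^ j) →
      ∀ j < n, f j = g j := by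
  intro n
  induction n with
  | zero => intro f g _ _ _ j hj; omega
  | succ n ih =>
    intro f g hf hg hsum j hj
    have hb0 : (b : ℤ) ≠ 0 := by positivity
    rw [digit_sum_expand, digit_sum_expand] at hsum
    have h0 : f 0 = g 0 := by
      apply hSres _ (hf 0 (by omega)) _ (hg 0 (by omega))
      have := congrArg (· % (b : ℤ)) hsum
      simpa [Int.add_mul_emod_self_left, add_comm] using this
    have hX : ∑ j ∈ Finset.range n, f (j + 1) * (b : ℤ) ^ j
        = ∑ j ∈ Finset.range n, g (j + 1) * (b : ℤ) ^ j := by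
      have hbx : (b : ℤ) * ∑ j ∈ Finset.range n, f (j + 1) * (b : ℤ) ^ j
          = (b : ℤ) * ∑ j ∈ Finset.range n, g (j + 1) * (b : ℤ) ^ j := by
        omega
      exact mul_left_cancel₀ hb0 hbx
    rcases j with _ | k
    · exact h0
    · exact ih (fun j => f (j + 1)) (fun j => g (j + 1))
        (fun j hj => hf (j + 1) (by omega)) (fun j hj => hg (j + 1) (by omega)) hX k (by omega)

/-- If `S − S ⊆ D` with `|S| > 1` (digits taken from a complete residue
system mod `b`), then every `A ⊆ [1, b^n]` whose difference set contains no nonzero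
element of `C_{b,D}` satisfies `|A| ≪ (b/|S|)^n`. -/
theorem cantor_intersective_power_savings
    (b : ℕ) (hb : 3 ≤ b) (D S : Finset ℤ)
    (hD : 2 ≤ D.card) (hDb : D.card < b)
    (hDres : ∀ d ∈ D, ∀ d' ∈ D, d % (b : ℤ) = d' % (b : ℤ) → d = d')
    (hS : 1 < S.card)
    (hSres : ∀ s ∈ S, ∀ s' ∈ S, s % (b : ℤ) = s' % (b : ℤ) → s = s')
    (hSS : ∀ s ∈ S, ∀ s' ∈ S, s - s' ∈ D) :
    ∃ c : ℝ, 0 < c ∧ ∀ n : ℕ, ∀ A : Finset ℤ,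
      (∀ a ∈ A, 1 ≤ a ∧ a ≤ (b : ℤ) ^ n) →
      (∀ a ∈ A, ∀ a' ∈ A, a ≠ a' → ¬ IsCantorZ b D (a - a')) →
      (A.card : ℝ) ≤ c * ((b : ℝ) / (S.card : ℝ)) ^ n := by
  classical
  have hSne : S.Nonempty := Finset.card_pos.mp (by omega)
  set m : ℤ := S.min' hSne with hm
  set Mx : ℤ := S.max' hSne with hMx
  have hmM : m ≤ Mx := S.min'_le _ (S.max'_mem hSne)
  refine ⟨1 + ((Mx - m : ℤ) : ℝ), by
    have : (0 : ℝ) ≤ ((Mx - m : ℤ) : ℝ) := by exact_mod_cast sub_nonneg.mpr hmM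
    linarith, ?_⟩
  intro n A hA hDiff
  -- the digit-string function
  set F : (Fin n → ℤ) → ℕ → ℤ := fun s j => if h : j < n then s ⟨j, h⟩ else 0 with hFdef
  set φ : ℤ × (Fin n → ℤ) → ℤ :=
    fun p => p.1 + ∑ j ∈ Finset.range n, F p.2 j * (b : ℤ) ^ j with hφdef
  set P : Finset (ℤ × (Fin n → ℤ)) := A ×ˢ Fintype.piFinset (fun _ : Fin n => S) with hP
  have hFS : ∀ s ∈ Fintype.piFinset (fun _ : Fin n => S), ∀ j < n, F s j ∈ S := by
    intro s hs j hj
    have := (Fintype.mem_piFinset.mp hs) ⟨j, hj⟩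
    simpa [hFdef, dif_pos hj] using this
  -- injectivity of φ on P
  have hinj : Set.InjOn φ P := by
    intro p hp q hq heq
    have hp' := Finset.mem_product.mp (Finset.mem_coe.mp hp)
    have hq' := Finset.mem_product.mp (Finset.mem_coe.mp hq)
    by_cases hEq : p.1 = q.1
    · -- equal first coordinates: digit strings agree
      have hsum : ∑ j ∈ Finset.range n, F p.2 j * (b : ℤ) ^ j
          = ∑ j ∈ Finset.range n, F q.2 j * (b : ℤ) ^ j := by
        have := heq
        simp only [hφdef] at this
        omega
      have hdig := digit_unique b (by omega) S hSres n (F p.2) (F q.2)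
        (hFS p.2 hp'.2) (hFS q.2 hq'.2) hsum
      have h2 : p.2 = q.2 := by
        funext i
        have := hdig i i.isLt
        simpa [hFdef, dif_pos i.isLt] using this
      exact Prod.ext hEq h2
    · -- distinct first coordinates: get a nonzero Cantor difference
      exfalso
      apply hDiff p.1 hp'.1 q.1 hq'.1 hEq
      have hn : 1 ≤ n := by
        by_contra h
        have hn0 : n = 0 := by omega
        apply hEq
        simp only [hφdef, hn0, Finset.range_zero, Finset.sum_empty] at heq
        omega
      refine ⟨n - 1, fun j => F q.2 j - F p.2 j, ?_, ?_⟩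
      · intro j hj
        have hjn : j < n := by omega
        simp only [hFdef, dif_pos hjn]
        exact hSS _ ((Fintype.mem_piFinset.mp hq'.2) ⟨j, hjn⟩)
          _ ((Fintype.mem_piFinset.mp hp'.2) ⟨j, hjn⟩)
      · have hn1 : n - 1 + 1 = n := by omega
        rw [hn1]
        have hsub : ∑ j ∈ Finset.range n, (F q.2 j - F p.2 j) * (b : ℤ) ^ j
            = (∑ j ∈ Finset.range n, F q.2 j * (b : ℤ) ^ j)
              - ∑ j ∈ Finset.range n, F p.2 j * (b : ℤ) ^ j := by
          rw [← Finset.sum_sub_distrib]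
          apply Finset.sum_congr rfl
          intro j _
          ring
        have := heq
        simp only [hφdef] at this
        show p.1 - q.1 = ∑ j ∈ Finset.range n, (F q.2 j - F p.2 j) * (b : ℤ) ^ j
        omega
  -- image bound
  set K : ℤ := ∑ j ∈ Finset.range n, (b : ℤ) ^ j with hK
  have hK0 : 0 ≤ K := Finset.sum_nonneg fun j _ => by positivity
  have hKb : K ≤ (b : ℤ) ^ n := by
    have hgeo : K * ((b : ℤ) - 1) = (b : ℤ) ^ n - 1 := geom_sum_mul _ _
    nlinarith [hK0]
  have himg : P.image φ ⊆ Finset.Icc (1 + m * K) ((b : ℤ) ^ n + Mx * K) := by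
    intro v hv
    obtain ⟨p, hp, rfl⟩ := Finset.mem_image.mp hv
    have hp' := Finset.mem_product.mp hp
    have ha := hA p.1 hp'.1
    have hlow : m * K ≤ ∑ j ∈ Finset.range n, F p.2 j * (b : ℤ) ^ j := by
      rw [hK, Finset.mul_sum]
      apply Finset.sum_le_sum
      intro j hj
      have hjn : j < n := Finset.mem_range.mp hj
      exact mul_le_mul_of_nonneg_right (S.min'_le _ (hFS p.2 hp'.2 j hjn)) (by positivity)
    have hhigh : ∑ j ∈ Finset.range n, F p.2 j * (b : ℤ) ^ j ≤ Mx * K := by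
      rw [hK, Finset.mul_sum]
      apply Finset.sum_le_sum
      intro j hj
      have hjn : j < n := Finset.mem_range.mp hj
      exact mul_le_mul_of_nonneg_right (S.le_max' _ (hFS p.2 hp'.2 j hjn)) (by positivity)
    rw [Finset.mem_Icc]
    constructor
    · simp only [hφdef]; omega
    · simp only [hφdef]; omega
  -- counting
  have hcard1 : P.card = A.card * S.card ^ n := by
    rw [hP, Finset.card_product, Fintype.card_piFinset]
    simp
  have hcard2 : (P.image φ).card = P.card := Finset.card_image_of_injOn hinj
  have hIccL : (1 : ℤ) + m * K ≤ (b : ℤ) ^ n + Mx * K + 1 := by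
    have hb1 : (1 : ℤ) ≤ (b : ℤ) ^ n := one_le_pow₀ (by exact_mod_cast by omega : (1:ℤ) ≤ (b:ℤ))
    nlinarith
  have hcard3 : ((Finset.Icc (1 + m * K) ((b : ℤ) ^ n + Mx * K)).card : ℤ)
      = (b : ℤ) ^ n + Mx * K + 1 - (1 + m * K) := by
    rw [Int.card_Icc]
    rw [Int.toNat_of_nonneg (by omega)]
  have hchain : (A.card * S.card ^ n : ℤ) ≤ (1 + (Mx - m)) * (b : ℤ) ^ n := by
    have h1 : (P.image φ).card ≤ (Finset.Icc (1 + m * K) ((b : ℤ) ^ n + Mx * K)).card :=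
      Finset.card_le_card himg
    have h2 : (A.card * S.card ^ n : ℤ)
        ≤ (b : ℤ) ^ n + Mx * K + 1 - (1 + m * K) := by
      rw [← hcard3]
      exact_mod_cast hcard1 ▸ hcard2 ▸ h1
    have h3 : (Mx - m) * K ≤ (Mx - m) * (b : ℤ) ^ n :=
      mul_le_mul_of_nonneg_left hKb (by omega)
    nlinarith
  -- pass to the reals
  have hsc : (0 : ℝ) < (S.card : ℝ) := by exact_mod_cast (by omega : 0 < S.card)
  have hreal : (A.card : ℝ) * (S.card : ℝ) ^ n ≤ (1 + ((Mx - m : ℤ) : ℝ)) * (b : ℝ) ^ n := by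
    exact_mod_cast hchain
  rw [div_pow, ← mul_div_assoc, le_div_iff₀ (by positivity)]
  exact hreal
end

section
/- For every x ∈ (0,1) and every 0 < ε < min{x, 1−x}, there exists an integer Cantor set C = C_{b,D} such that (1) its dimension log|D|/log b lies in [x−ε, x+ε], and (2) C is intersective with power savings of order at least x − ε (i.e., any A ⊆ [N] with (A−A) ∩ C = ∅ has |A| ≪ N^{1−(x−ε)}). -/
/-!
Take `D = {-k, …, k}` with `k = ⌈b ^ x⌉` and `b` large, so that `|D| ≈ b ^ x` and the dimension is
close to `x`. Cut the base-`b` digits `{0, …, b - 1}` into `⌈b / (k + 1)⌉ ≈ b ^ (1 - x)` blocks of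
`k + 1` consecutive digits. Two integers in `[1, b ^ t]` whose digits lie in the same blocks
position by position differ by an element of `C_{b,D}`, so a set whose differences avoid `C_{b,D}`
has at most `⌈b / (k + 1)⌉ ^ t` elements, which is `≪ N ^ (1 - x + ε)` for `t = ⌊log_b N⌋ + 1`.
-/

open Finset Real Filter

lemma sum_range_div_pow_mod_mul_pow (b n t : ℕ) :
    ∑ j ∈ range t, n / b ^ j % b * b ^ j = n % b ^ t := by
  induction t with
  | zero => simp [Nat.mod_one]
  | succ t ih =>
    rw [sum_range_succ, ih, ← Nat.mod_mul_right_div_self, pow_succ,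
      ← Nat.mod_mod_of_dvd n (Dvd.intro b rfl : b ^ t ∣ b ^ t * b)]
    exact Nat.mod_add_div' (n % (b ^ t * b)) (b ^ t)

lemma sub_mem_Icc_of_div_eq {d d' k : ℕ} (h : d / (k + 1) = d' / (k + 1)) :
    (d : ℤ) - d' ∈ Icc (-(k : ℤ)) k := by
  have hd := Nat.div_add_mod d (k + 1)
  have hd' := Nat.div_add_mod d' (k + 1)
  have hr := Nat.mod_lt d k.add_one_pos
  have hr' := Nat.mod_lt d' k.add_one_pos
  rw [h] at hd
  generalize (k + 1) * (d' / (k + 1)) = q at hd hd'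
  rw [mem_Icc]
  omega

lemma eq_of_emod_eq_of_mem_Icc {b k : ℕ} (hkb : 2 * k < b) {d d' : ℤ}
    (hd : d ∈ Icc (-(k : ℤ)) k) (hd' : d' ∈ Icc (-(k : ℤ)) k) (h : d % b = d' % b) : d = d' := by
  rw [mem_Icc] at hd hd'
  have := Int.eq_zero_of_abs_lt_dvd (Int.ModEq.dvd h) (by rw [abs_lt]; omega)
  omega

section CantorSet

variable {b k t : ℕ} {D : Finset ℤ}

lemma isCantorZ_sub_of_digit_div_eq (hD : Icc (-(k : ℤ)) k ⊆ D) (ht : 0 < t) {m m' : ℕ}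
    (hm : m < b ^ t) (hm' : m' < b ^ t)
    (h : ∀ j < t, m / b ^ j % b / (k + 1) = m' / b ^ j % b / (k + 1)) :
    IsCantorZ b D (m - m') := by
  have hsum : ∀ n < b ^ t, ∑ j ∈ range t, ((n / b ^ j % b : ℕ) : ℤ) * (b : ℤ) ^ j = n := by
    intro n hn
    exact_mod_cast (sum_range_div_pow_mod_mul_pow b n t).trans (Nat.mod_eq_of_lt hn)
  refine ⟨t - 1, fun j => ((m / b ^ j % b : ℕ) : ℤ) - (m' / b ^ j % b : ℕ),
    fun j hj => hD (sub_mem_Icc_of_div_eq (h j (by omega))), ?_⟩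
  simp only [Nat.sub_add_cancel ht, sub_mul, sum_sub_distrib, hsum m hm, hsum m' hm']

lemma card_le_of_forall_sub_not_isCantorZ (hb : 0 < b) (hD : Icc (-(k : ℤ)) k ⊆ D) (ht : 0 < t)
    {A : Finset ℤ} {c : ℤ} (hA : ∀ a ∈ A, c ≤ a ∧ a < c + b ^ t)
    (hAD : ∀ a ∈ A, ∀ a' ∈ A, a ≠ a' → ¬ IsCantorZ b D (a - a')) :
    #A ≤ ((b - 1) / (k + 1) + 1) ^ t := by
  let blocks : ℤ → Fin t → ℕ := fun a j => (a - c).toNat / b ^ (j : ℕ) % b / (k + 1)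
  have hmaps : ∀ a ∈ A, blocks a ∈ Fintype.piFinset fun _ => range ((b - 1) / (k + 1) + 1) := by
    intro a _
    simp only [Fintype.mem_piFinset, mem_range, Nat.lt_succ_iff]
    exact fun j => Nat.div_le_div_right (Nat.le_sub_one_of_lt (Nat.mod_lt _ hb))
  have hinj : Set.InjOn blocks A := by
    intro a ha a' ha' hblocks
    by_contra hne
    refine hAD a ha a' ha' hne ?_
    obtain ⟨hca, hac⟩ := hA a ha
    obtain ⟨hca', hac'⟩ := hA a' ha'
    convert isCantorZ_sub_of_digit_div_eq hD ht (m := (a - c).toNat) (m' := (a' - c).toNat)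
      (by zify; omega) (by zify; omega) (fun j hj => congrFun hblocks ⟨j, hj⟩) using 1
    omega
  simpa using card_le_card_of_injOn blocks hmaps hinj

end CantorSet

lemma pow_log_succ_le_mul_rpow {b N : ℕ} (hb : 1 < b) (hN : N ≠ 0) {B e : ℝ} (hB0 : 0 ≤ B)
    (hB : B ≤ (b : ℝ) ^ e) (he : 0 ≤ e) :
    B ^ (Nat.log b N + 1) ≤ (b : ℝ) ^ e * (N : ℝ) ^ e := by
  calc B ^ (Nat.log b N + 1) ≤ ((b : ℝ) ^ e) ^ (Nat.log b N + 1) := by gcongr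
    _ = (b : ℝ) ^ e * (((b ^ Nat.log b N : ℕ) : ℝ)) ^ e := by
      rw [pow_succ', rpow_pow_comm (by positivity), Nat.cast_pow]
    _ ≤ (b : ℝ) ^ e * (N : ℝ) ^ e := by
      gcongr
      exact_mod_cast Nat.pow_log_le_self b hN

lemma card_le_mul_rpow_of_forall_sub_not_isCantorZ {b k : ℕ} {D : Finset ℤ} (hb : 1 < b)
    (hD : Icc (-(k : ℤ)) k ⊆ D) {e : ℝ} (he : 0 ≤ e)
    (hblocks : (((b - 1) / (k + 1) + 1 : ℕ) : ℝ) ≤ (b : ℝ) ^ e) {N : ℕ} (hN : 1 ≤ N)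
    {A : Finset ℤ} (hA : ∀ a ∈ A, 1 ≤ a ∧ a ≤ (N : ℤ))
    (hAD : ∀ a ∈ A, ∀ a' ∈ A, a ≠ a' → ¬ IsCantorZ b D (a - a')) :
    (#A : ℝ) ≤ (b : ℝ) ^ e * (N : ℝ) ^ e := by
  have hNb : (N : ℤ) < b ^ (Nat.log b N + 1) := by exact_mod_cast Nat.lt_pow_succ_log_self hb N
  have hcard := card_le_of_forall_sub_not_isCantorZ (by omega) hD (t := Nat.log b N + 1)
    (Nat.succ_pos _) (c := 1) (fun a ha => ⟨(hA a ha).1, by linarith [(hA a ha).2]⟩) hAD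
  calc (#A : ℝ) ≤ (((b - 1) / (k + 1) + 1 : ℕ) : ℝ) ^ (Nat.log b N + 1) := by exact_mod_cast hcard
    _ ≤ (b : ℝ) ^ e * (N : ℝ) ^ e :=
      pow_log_succ_le_mul_rpow hb (by omega) (Nat.cast_nonneg _) hblocks he

lemma exists_cantor_params {x ε : ℝ} (hx0 : 0 ≤ x) (hx1 : x < 1) (hε : 0 < ε) :
    ∃ b k : ℕ, 3 ≤ b ∧ 1 ≤ k ∧ 2 * k + 1 < b ∧ (b : ℝ) ^ x ≤ 2 * k + 1 ∧
      (2 * k + 1 : ℝ) ≤ (b : ℝ) ^ (x + ε) ∧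
      (((b - 1) / (k + 1) + 1 : ℕ) : ℝ) ≤ (b : ℝ) ^ (1 - (x - ε)) := by
  have eventually_six_le : ∀ {u : ℝ}, 0 < u → ∀ᶠ b : ℕ in atTop, (6 : ℝ) ≤ (b : ℝ) ^ u :=
    fun hu => ((tendsto_rpow_atTop hu).comp tendsto_natCast_atTop_atTop).eventually_ge_atTop 6
  obtain ⟨b, hb3, h6ε, h6x⟩ := ((eventually_ge_atTop 3).and
    ((eventually_six_le hε).and (eventually_six_le (sub_pos.2 hx1)))).exists
  have hb0 : (0 : ℝ) < b := by positivity
  set β := (b : ℝ) ^ x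
  set k := ⌈β⌉₊
  have hβ : 1 ≤ β := one_le_rpow (by exact_mod_cast (by omega : 1 ≤ b)) hx0
  have hβk : β ≤ k := Nat.le_ceil β
  have hkβ : (k : ℝ) < β + 1 := Nat.ceil_lt_add_one (by linarith)
  have hsplit : ∀ u : ℝ, (b : ℝ) ^ (x + u) = (b : ℝ) ^ u * β := fun u => by
    rw [rpow_add hb0, mul_comm]
  have hb_eq : (b : ℝ) = (b : ℝ) ^ (1 - x) * β := by rw [← hsplit, add_sub_cancel, rpow_one]
  have hβb : 6 * β ≤ b := by
    rw [hb_eq]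
    nlinarith
  have hkb : 2 * k + 1 < b := by exact_mod_cast (by linarith : (2 * k + 1 : ℝ) < b)
  refine ⟨b, k, hb3, Nat.one_le_ceil_iff.2 (by linarith), hkb, by linarith, ?_, ?_⟩
  · rw [hsplit]
    nlinarith
  · have hblocks : ((b - 1) / (k + 1) + 1) * (k + 1) ≤ 2 * b := by
      have := Nat.div_mul_le_self (b - 1) (k + 1)
      rw [add_mul, one_mul]
      omega
    refine le_of_mul_le_mul_right ?_ (by linarith : 0 < β)
    calc (((b - 1) / (k + 1) + 1 : ℕ) : ℝ) * β ≤ (((b - 1) / (k + 1) + 1 : ℕ) : ℝ) * (k + 1) := by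
          gcongr; linarith
      _ ≤ 2 * b := by exact_mod_cast hblocks
      _ ≤ (b : ℝ) ^ ε * (b : ℝ) ^ (1 - x) * β := by
          rw [mul_assoc, ← hb_eq]
          nlinarith
      _ = (b : ℝ) ^ (1 - (x - ε)) * β := by
          rw [← rpow_add hb0]
          ring_nf

theorem cantor_prescribed_dimension_power_savings_general
    (x ε : ℝ) (hx0 : 0 < x) (hx1 : x < 1) (hε0 : 0 < ε) :
    ∃ b : ℕ, ∃ D : Finset ℤ, 3 ≤ b ∧ 2 ≤ D.card ∧ D.card < b ∧
      (∀ d ∈ D, ∀ d' ∈ D, d % (b : ℤ) = d' % (b : ℤ) → d = d') ∧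
      x - ε ≤ Real.log (D.card : ℝ) / Real.log (b : ℝ) ∧
      Real.log (D.card : ℝ) / Real.log (b : ℝ) ≤ x + ε ∧
      ∃ c : ℝ, 0 < c ∧ ∀ N : ℕ, 1 ≤ N → ∀ A : Finset ℤ,
        (∀ a ∈ A, 1 ≤ a ∧ a ≤ (N : ℤ)) →
        (∀ a ∈ A, ∀ a' ∈ A, a ≠ a' → ¬ IsCantorZ b D (a - a')) →
        (A.card : ℝ) ≤ c * (N : ℝ) ^ ((1 : ℝ) - (x - ε)) := by
  obtain ⟨b, k, hb3, hk1, hkb, hlow, hup, hblocks⟩ := exists_cantor_params hx0.le hx1 hε0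
  have hcard : #(Icc (-(k : ℤ)) k) = 2 * k + 1 := by rw [Int.card_Icc]; omega
  have hb1 : (1 : ℝ) < b := by exact_mod_cast (by omega : 1 < b)
  refine ⟨b, Icc (-(k : ℤ)) k, hb3, by omega, by omega,
    fun d hd d' hd' => eq_of_emod_eq_of_mem_Icc (by omega) hd hd', ?_, ?_,
    (b : ℝ) ^ (1 - (x - ε)), by positivity, fun N hN A hA hAD =>
      card_le_mul_rpow_of_forall_sub_not_isCantorZ (by omega) subset_rfl (by linarith)
        hblocks hN hA hAD⟩
  · rw [hcard, log_div_log, le_logb_iff_rpow_le hb1 (by positivity)]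
    calc (b : ℝ) ^ (x - ε) ≤ (b : ℝ) ^ x := rpow_le_rpow_of_exponent_le hb1.le (by linarith)
      _ ≤ _ := by exact_mod_cast hlow
  · rw [hcard, log_div_log, logb_le_iff_le_rpow hb1 (by positivity)]
    exact_mod_cast hup

/-- For every `x ∈ (0,1)` and `0 < ε < min{x, 1−x}` there is an integer
Cantor set `C_{b,D}` whose dimension `log|D|/log b` lies in `[x−ε, x+ε]` and which is
intersective with power savings of order at least `x − ε`: any `A ⊆ [1, N]` whose
difference set avoids the nonzero elements of `C_{b,D}` has `|A| ≪ N^{1−(x−ε)}`. -/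
theorem cantor_prescribed_dimension_power_savings
    (x ε : ℝ) (hx0 : 0 < x) (hx1 : x < 1) (hε0 : 0 < ε) (hε : ε < min x (1 - x)) :
    ∃ b : ℕ, ∃ D : Finset ℤ, 3 ≤ b ∧ 2 ≤ D.card ∧ D.card < b ∧
      (∀ d ∈ D, ∀ d' ∈ D, d % (b : ℤ) = d' % (b : ℤ) → d = d') ∧
      x - ε ≤ Real.log (D.card : ℝ) / Real.log (b : ℝ) ∧
      Real.log (D.card : ℝ) / Real.log (b : ℝ) ≤ x + ε ∧
      ∃ c : ℝ, 0 < c ∧ ∀ N : ℕ, 1 ≤ N → ∀ A : Finset ℤ,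
        (∀ a ∈ A, 1 ≤ a ∧ a ≤ (N : ℤ)) →
        (∀ a ∈ A, ∀ a' ∈ A, a ≠ a' → ¬ IsCantorZ b D (a - a')) →
        (A.card : ℝ) ≤ c * (N : ℝ) ^ ((1 : ℝ) - (x - ε)) :=
  cantor_prescribed_dimension_power_savings_general x ε hx0 hx1 hε0
end

section
/- Let C = C_{b,D} with increasing enumeration (c_n) and δ = |D|. Then for every i ≥ 1, every N ≥ 1 and all real α, β: | E_{n∈[N]} e(c_n α + s_b(c_n) β) − E_{n∈[N/δ^i]} e(c_n b^i α + s_b(c_n) β) · E_{ℓ∈[δ^i]} e(c_ℓ α + s_b(c_ℓ) β) | ≪ δ^i / N, where E denotes the average over the indicated range. -/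
/-- `e(t) = exp(2πit)`. -/
noncomputable def eR (t : ℝ) : ℂ := Complex.exp (((2 * Real.pi * t : ℝ) : ℂ) * Complex.I)

/-!
Counting shows that `C = C_{b,D}` has `δ · #(C ∩ [0, y)) + #(C ∩ [0, z))` elements below
`b y + z` whenever `y ∈ C` and `z ≤ b`, where `δ = |D|`; evaluated at `y = c_n`, `z = c_r`
this is `c_{δ n + r} = b c_n + c_r` for `r < δ`, and iterating gives
`c_{δ^i n + ℓ} = b^i c_n + c_ℓ` with additive digit sums. So the summand at `δ^i n + ℓ`
factors, the first `δ^i ⌊N/δ^i⌋` terms sum exactly to the product of the two sums, and the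
fewer than `δ^i` remaining terms move the average by at most `2 δ^i / N`.
-/

open Finset

lemma eR_add (s t : ℝ) : eR (s + t) = eR s * eR t := by
  rw [eR, eR, eR, ← Complex.exp_add]
  push_cast
  ring_nf

lemma norm_eR (t : ℝ) : ‖eR t‖ = 1 := Complex.norm_exp_ofReal_mul_I _

lemma sum_range_mul_eq_mul_sum {R : Type*} [NonUnitalNonAssocSemiring R] {f g : ℕ → R} {Δ : ℕ}
    (hfg : ∀ n ℓ, ℓ < Δ → f (Δ * n + ℓ) = g n * f ℓ) (M : ℕ) :
    ∑ k ∈ range (Δ * M), f k = (∑ n ∈ range M, g n) * ∑ ℓ ∈ range Δ, f ℓ := by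
  induction M with
  | zero => simp
  | succ M ih =>
    rw [Nat.mul_succ, sum_range_add, ih, sum_range_succ, add_mul]
    congr 1
    rw [mul_sum]
    exact sum_congr rfl fun ℓ hℓ => hfg M ℓ (mem_range.1 hℓ)

section Averages

variable {𝕜 : Type*} [RCLike 𝕜]

lemma norm_average_le_one {f : ℕ → 𝕜} (hf : ∀ k, ‖f k‖ ≤ 1) (K : ℕ) :
    ‖(K : 𝕜)⁻¹ * ∑ k ∈ range K, f k‖ ≤ 1 := by
  rcases K.eq_zero_or_pos with rfl | hK
  · simp
  rw [norm_mul, norm_inv, RCLike.norm_natCast, inv_mul_le_one₀ (Nat.cast_pos.2 hK)]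
  simpa using norm_sum_le_of_le (range K) fun k _ => hf k

lemma norm_average_sub_average_le {f : ℕ → 𝕜} (hf : ∀ k, ‖f k‖ ≤ 1) {K N : ℕ} (hKN : K ≤ N) :
    ‖(N : 𝕜)⁻¹ * ∑ k ∈ range N, f k - (K : 𝕜)⁻¹ * ∑ k ∈ range K, f k‖
      ≤ 2 * ((N : ℝ) - K) / N := by
  rcases N.eq_zero_or_pos with rfl | hN
  · simp [Nat.le_zero.1 hKN]
  set a := (K : 𝕜)⁻¹ * ∑ k ∈ range K, f k
  have hSK : ∑ k ∈ range K, f k = K * a := by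
    rcases K.eq_zero_or_pos with rfl | hK
    · simp
    · rw [mul_inv_cancel_left₀ (Nat.cast_ne_zero.2 hK.ne')]
  have hT : ‖∑ k ∈ Ico K N, f k‖ ≤ (N - K : ℕ) := by
    simpa using norm_sum_le_of_le (Ico K N) fun k _ => hf k
  have hsplit : (N : 𝕜)⁻¹ * ∑ k ∈ range N, f k - a
      = (N : 𝕜)⁻¹ * (∑ k ∈ Ico K N, f k - ((N - K : ℕ) : 𝕜) * a) := by
    have hN' : (N : 𝕜) ≠ 0 := Nat.cast_ne_zero.2 hN.ne'
    rw [← sum_range_add_sum_Ico f hKN, hSK, Nat.cast_sub hKN]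
    field_simp
    ring
  calc _ ≤ (N : ℝ)⁻¹ * ((N - K : ℕ) + (N - K : ℕ) * 1) := by
        rw [hsplit, norm_mul, norm_inv, RCLike.norm_natCast]
        gcongr
        refine (norm_sub_le _ _).trans (add_le_add hT ?_)
        rw [norm_mul, RCLike.norm_natCast]
        gcongr
        exact norm_average_le_one hf K
    _ = _ := by
        rw [Nat.cast_sub hKN]
        ring

lemma norm_average_sub_mul_average_le {f g : ℕ → 𝕜} (hf : ∀ k, ‖f k‖ ≤ 1) {Δ : ℕ}
    (hΔ : 0 < Δ) (hfg : ∀ n ℓ, ℓ < Δ → f (Δ * n + ℓ) = g n * f ℓ) (N : ℕ) :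
    ‖(N : 𝕜)⁻¹ * ∑ k ∈ range N, f k
        - (((N / Δ : ℕ) : 𝕜)⁻¹ * ∑ n ∈ range (N / Δ), g n) * ((Δ : 𝕜)⁻¹ * ∑ ℓ ∈ range Δ, f ℓ)‖
      ≤ 2 * Δ / N := by
  have hprod : (((N / Δ : ℕ) : 𝕜)⁻¹ * ∑ n ∈ range (N / Δ), g n) * ((Δ : 𝕜)⁻¹ * ∑ ℓ ∈ range Δ, f ℓ)
      = ((Δ * (N / Δ) : ℕ) : 𝕜)⁻¹ * ∑ k ∈ range (Δ * (N / Δ)), f k := by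
    rw [sum_range_mul_eq_mul_sum hfg, Nat.cast_mul, mul_inv]
    ring
  have hrem : (N : ℝ) - (Δ * (N / Δ) : ℕ) ≤ Δ := by
    rw [sub_le_iff_le_add, ← Nat.cast_add, Nat.cast_le]
    have := Nat.mod_lt N hΔ
    have := Nat.div_add_mod N Δ
    omega
  rw [hprod]
  calc _ ≤ 2 * ((N : ℝ) - (Δ * (N / Δ) : ℕ)) / N :=
        norm_average_sub_average_le hf (Nat.mul_div_le N Δ)
    _ ≤ 2 * Δ / N := by gcongr

end Averages

lemma Nat.pow_mul_add_of_mul_add {u : ℕ → ℕ} {δ a : ℕ} (hu0 : u 0 = 0)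
    (hu : ∀ n r, r < δ → u (δ * n + r) = a * u n + u r) (i n ℓ : ℕ) (hℓ : ℓ < δ ^ i) :
    u (δ ^ i * n + ℓ) = a ^ i * u n + u ℓ := by
  induction i generalizing ℓ with
  | zero => simp_all
  | succ i ih =>
    have hδ : 0 < δ := Nat.pos_of_ne_zero fun h => by simp [h] at hℓ
    have hq : ℓ / δ < δ ^ i := (Nat.div_lt_iff_lt_mul hδ).2 (pow_succ δ i ▸ hℓ)
    have hr : ℓ % δ < δ := Nat.mod_lt ℓ hδ
    calc u (δ ^ (i + 1) * n + ℓ) = u (δ * (δ ^ i * n + ℓ / δ) + ℓ % δ) := by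
          congr 1
          nth_rewrite 1 [← Nat.div_add_mod ℓ δ]
          ring
      _ = a ^ (i + 1) * u n + (a * u (ℓ / δ) + u (ℓ % δ)) := by
          rw [hu _ _ hr, ih _ hq]; ring
      _ = a ^ (i + 1) * u n + u ℓ := by rw [← hu _ _ hr, Nat.div_add_mod]

lemma Nat.digits_mul_add {b y k : ℕ} (hb : 1 < b) (hk : k < b) (h : y ≠ 0 ∨ k ≠ 0) :
    Nat.digits b (b * y + k) = k :: Nat.digits b y := by
  rw [add_comm]
  exact Nat.digits_add b hb k y hk h.symm

lemma Nat.digits_sum_mul_add {b y k : ℕ} (hb : 1 < b) (hk : k < b) :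
    (Nat.digits b (b * y + k)).sum = (Nat.digits b y).sum + k := by
  by_cases h : y = 0 ∧ k = 0
  · obtain ⟨rfl, rfl⟩ := h
    simp
  · rw [Nat.digits_mul_add hb hk (by tauto), List.sum_cons, add_comm]

lemma Nat.digits_sum_of_lt {b k : ℕ} (hb : 1 < b) (hk : k < b) : (Nat.digits b k).sum = k := by
  simpa using Nat.digits_sum_mul_add (y := 0) hb hk

def HasDigitsIn (b : ℕ) (D : Finset ℕ) (m : ℕ) : Prop := ∀ d ∈ Nat.digits b m, d ∈ D

namespace HasDigitsIn

instance (b : ℕ) (D : Finset ℕ) : DecidablePred (HasDigitsIn b D) :=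
  fun m => inferInstanceAs (Decidable (∀ d ∈ Nat.digits b m, d ∈ D))

variable {b : ℕ} {D : Finset ℕ}

@[simp] lemma zero : HasDigitsIn b D 0 := by simp [HasDigitsIn]

lemma mul_add_iff (hb : 1 < b) (h0 : 0 ∈ D) {y k : ℕ} (hk : k < b) :
    HasDigitsIn b D (b * y + k) ↔ HasDigitsIn b D y ∧ k ∈ D := by
  by_cases h : y = 0 ∧ k = 0
  · obtain ⟨rfl, rfl⟩ := h
    simp [h0]
  · rw [HasDigitsIn, Nat.digits_mul_add hb hk (by tauto), List.forall_mem_cons, and_comm]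
    rfl

lemma iff_mem (hb : 1 < b) (h0 : 0 ∈ D) {k : ℕ} (hk : k < b) : HasDigitsIn b D k ↔ k ∈ D := by
  simpa using mul_add_iff (y := 0) hb h0 hk

lemma count_base (hb : 1 < b) (h0 : 0 ∈ D) (hDsub : ∀ d ∈ D, d < b) :
    Nat.count (HasDigitsIn b D) b = D.card := by
  rw [Nat.count_eq_card_filter_range]
  congr 1
  ext k
  rw [mem_filter, mem_range]
  exact ⟨fun ⟨hk, h⟩ => (iff_mem hb h0 hk).1 h,
    fun h => ⟨hDsub k h, (iff_mem hb h0 (hDsub k h)).2 h⟩⟩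

lemma count_block (hb : 1 < b) (h0 : 0 ∈ D) (y : ℕ) {z : ℕ} (hz : z ≤ b) :
    Nat.count (fun k => HasDigitsIn b D (b * y + k)) z
      = if HasDigitsIn b D y then Nat.count (HasDigitsIn b D) z else 0 := by
  rw [Nat.count_eq_card_filter_range]
  split_ifs with hy
  · rw [Nat.count_eq_card_filter_range]
    refine congrArg card (filter_congr fun k hk => ?_)
    have hkb : k < b := (mem_range.1 hk).trans_le hz
    rw [mul_add_iff hb h0 hkb, iff_mem hb h0 hkb, and_iff_right hy]
  · rw [card_eq_zero, filter_eq_empty_iff]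
    intro k hk h
    exact hy ((mul_add_iff hb h0 ((mem_range.1 hk).trans_le hz)).1 h).1

lemma count_mul (hb : 1 < b) (h0 : 0 ∈ D) (y : ℕ) :
    Nat.count (HasDigitsIn b D) (b * y)
      = Nat.count (HasDigitsIn b D) b * Nat.count (HasDigitsIn b D) y := by
  induction y with
  | zero => simp
  | succ y ih =>
    rw [Nat.mul_succ, Nat.count_add, ih, count_block hb h0 y le_rfl, Nat.count_succ]
    split_ifs <;> ring

lemma count_mul_add (hb : 1 < b) (h0 : 0 ∈ D) {y z : ℕ} (hy : HasDigitsIn b D y) (hz : z ≤ b) :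
    Nat.count (HasDigitsIn b D) (b * y + z)
      = Nat.count (HasDigitsIn b D) b * Nat.count (HasDigitsIn b D) y
        + Nat.count (HasDigitsIn b D) z := by
  rw [Nat.count_add, count_mul hb h0, count_block hb h0 y hz, if_pos hy]

lemma nth_lt_base (hb : 1 < b) (h0 : 0 ∈ D) (hDsub : ∀ d ∈ D, d < b) {r : ℕ} (hr : r < D.card) :
    Nat.nth (HasDigitsIn b D) r < b :=
  Nat.nth_lt_of_lt_count (by rwa [count_base hb h0 hDsub])

lemma nth_mul_add (hb : 1 < b) (h0 : 0 ∈ D) (hDsub : ∀ d ∈ D, d < b)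
    (hinf : (Set.ofPred (HasDigitsIn b D)).Infinite) (n : ℕ) {r : ℕ} (hr : r < D.card) :
    Nat.nth (HasDigitsIn b D) (D.card * n + r)
      = b * Nat.nth (HasDigitsIn b D) n + Nat.nth (HasDigitsIn b D) r := by
  have hrb := nth_lt_base hb h0 hDsub hr
  have hn := Nat.nth_mem_of_infinite hinf n
  have hmem : HasDigitsIn b D (b * Nat.nth (HasDigitsIn b D) n + Nat.nth (HasDigitsIn b D) r) :=
    (mul_add_iff hb h0 hrb).2 ⟨hn, (iff_mem hb h0 hrb).1 (Nat.nth_mem_of_infinite hinf r)⟩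
  rw [← Nat.nth_count hmem, count_mul_add hb h0 hn hrb.le, count_base hb h0 hDsub,
    Nat.count_nth_of_infinite hinf, Nat.count_nth_of_infinite hinf]

lemma digits_sum_nth_mul_add (hb : 1 < b) (h0 : 0 ∈ D) (hDsub : ∀ d ∈ D, d < b)
    (hinf : (Set.ofPred (HasDigitsIn b D)).Infinite) (n : ℕ) {r : ℕ} (hr : r < D.card) :
    (Nat.digits b (Nat.nth (HasDigitsIn b D) (D.card * n + r))).sum
      = (Nat.digits b (Nat.nth (HasDigitsIn b D) n)).sum
        + (Nat.digits b (Nat.nth (HasDigitsIn b D) r)).sum := by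
  have hrb := nth_lt_base hb h0 hDsub hr
  rw [nth_mul_add hb h0 hDsub hinf n hr, Nat.digits_sum_mul_add hb hrb, Nat.digits_sum_of_lt hb hrb]

end HasDigitsIn

theorem cantor_exponential_sum_splitting_general
    (b : ℕ) (D : Finset ℕ) (hDb : D.card < b)
    (hDsub : ∀ d ∈ D, d < b) (h0 : 0 ∈ D)
    (c : ℕ → ℕ) (hc : StrictMono c)
    (hcr : Set.range c = {m : ℕ | ∀ d ∈ Nat.digits b m, d ∈ D}) :
    ∃ C : ℝ, 0 < C ∧ ∀ i N : ℕ, 1 ≤ i → 1 ≤ N → ∀ α β : ℝ,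
      ‖((N : ℂ)⁻¹ * ∑ n ∈ Finset.range N,
            eR (α * (c n : ℝ) + β * ((Nat.digits b (c n)).sum : ℝ)))
        - ((((N / D.card ^ i : ℕ) : ℂ)⁻¹ * ∑ n ∈ Finset.range (N / D.card ^ i),
              eR ((b : ℝ) ^ i * α * (c n : ℝ) + β * ((Nat.digits b (c n)).sum : ℝ)))
            * (((D.card ^ i : ℕ) : ℂ)⁻¹ * ∑ l ∈ Finset.range (D.card ^ i),
              eR (α * (c l : ℝ) + β * ((Nat.digits b (c l)).sum : ℝ))))‖
        ≤ C * (D.card : ℝ) ^ i / (N : ℝ) := by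
  have hδ : 0 < D.card := card_pos.2 ⟨0, h0⟩
  have hb : 1 < b := Nat.lt_of_le_of_lt hδ hDb
  have hinf : (Set.ofPred (HasDigitsIn b D)).Infinite :=
    hcr ▸ Set.infinite_range_of_injective hc.injective
  obtain rfl : c = Nat.nth (HasDigitsIn b D) :=
    (hc.range_inj (Nat.nth_strictMono hinf)).1 (hcr.trans (Nat.range_nth_of_infinite hinf).symm)
  set c := Nat.nth (HasDigitsIn b D)
  have hc0 : c 0 = 0 := Nat.nth_zero_of_zero HasDigitsIn.zero
  have hc_split := Nat.pow_mul_add_of_mul_add hc0 fun n r hr =>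
    HasDigitsIn.nth_mul_add hb h0 hDsub hinf n hr
  have hs_split := Nat.pow_mul_add_of_mul_add (δ := D.card) (a := 1)
      (u := fun n => (Nat.digits b (c n)).sum) (by simp [hc0]) fun n r hr => by
    rw [one_mul]
    exact HasDigitsIn.digits_sum_nth_mul_add hb h0 hDsub hinf n hr
  refine ⟨2, two_pos, fun i N _ _ α β => ?_⟩
  have := norm_average_sub_mul_average_le (fun k => (norm_eR _).le) (pow_pos hδ i)
    (f := fun n => eR (α * (c n : ℝ) + β * ((Nat.digits b (c n)).sum : ℝ)))
    (g := fun n => eR ((b : ℝ) ^ i * α * (c n : ℝ) + β * ((Nat.digits b (c n)).sum : ℝ)))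
    (fun n ℓ hℓ => by
      rw [hs_split i n ℓ hℓ, hc_split i n ℓ hℓ, ← eR_add]
      push_cast
      ring_nf) N
  simpa using this

/-- Splitting estimate for the exponential sums along the increasing
enumeration `(c_n)` of the Cantor set `C_{b,D}` (with `0 ∈ D`, `δ = |D|`): for all
`i ≥ 1`, `N ≥ 1` and real `α, β`, the average `E_{n<N} e(c_n α + s_b(c_n) β)` differs
from `E_{n<⌊N/δ^i⌋} e(c_n b^i α + s_b(c_n) β) · E_{ℓ<δ^i} e(c_ℓ α + s_b(c_ℓ) β)`
by `O(δ^i / N)`. -/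
theorem cantor_exponential_sum_splitting
    (b : ℕ) (hb : 3 ≤ b) (D : Finset ℕ) (hD : 2 ≤ D.card) (hDb : D.card < b)
    (hDsub : ∀ d ∈ D, d < b) (h0 : 0 ∈ D)
    (c : ℕ → ℕ) (hc : StrictMono c)
    (hcr : Set.range c = {m : ℕ | ∀ d ∈ Nat.digits b m, d ∈ D}) :
    ∃ C : ℝ, 0 < C ∧ ∀ i N : ℕ, 1 ≤ i → 1 ≤ N → ∀ α β : ℝ,
      ‖((N : ℂ)⁻¹ * ∑ n ∈ Finset.range N,
            eR (α * (c n : ℝ) + β * ((Nat.digits b (c n)).sum : ℝ)))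
        - ((((N / D.card ^ i : ℕ) : ℂ)⁻¹ * ∑ n ∈ Finset.range (N / D.card ^ i),
              eR ((b : ℝ) ^ i * α * (c n : ℝ) + β * ((Nat.digits b (c n)).sum : ℝ)))
            * (((D.card ^ i : ℕ) : ℂ)⁻¹ * ∑ l ∈ Finset.range (D.card ^ i),
              eR (α * (c l : ℝ) + β * ((Nat.digits b (c l)).sum : ℝ))))‖
        ≤ C * (D.card : ℝ) ^ i / (N : ℝ) :=
  cantor_exponential_sum_splitting_general b D hDb hDsub h0 c hc hcr
end

section
/- Let C = C_{b,D} with 2 ≤ |D| ≤ b, increasing enumeration (k_n), and let s be the largest integer such that D is contained in an arithmetic progression of common difference s. If q is an integer with gcd(q, b) = 1 and gcd(q, s) = 1, then the sequence (s_b(k_n) mod q) is asymptotically uniformly distributed on ℤ_q, i.e., for every residue a mod q, lim_{N→∞} (1/N) |{n ≤ N : s_b(k_n) ≡ a (mod q)}| = 1/q. -/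
/-!
Let `c = |D|` and let `w` enumerate `D` increasingly. The map `n ↦ w (n % c) + b * k (n / c)` is
increasing with range `C_{b,D}` (minus `0` when `0 ∉ D`), so
`k (ε + n) = w (n % c) + b * k (n / c)` with `ε = 0` if `0 ∈ D` and `ε = 1` otherwise, and the
digit sums satisfy `A (ε + n) = w (n % c) + A (n / c)`. For a nontrivial additive character `ψ`
of `ℤ/q`, the Weyl sums `T N = ∑_{n<N} ψ (A n)` then obey `‖T N‖ ≤ ρ ‖T (N / c)‖ + c` up to
rounding of `N / c`, where `ρ = ‖∑_{d∈D} ψ d‖`, so `T N = o(N)` as soon as `ρ < c`. Equality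
`ρ = c` would force `ψ` to be constant on `D`, so the order of `ψ 1` divides all differences of
elements of `D`, hence divides `s`; it also divides `q`, so `ψ = 1`. Orthogonality of characters
turns `T N = o(N)` for all `ψ ≠ 1` into equidistribution.
-/

open Finset Filter Topology

def InAP (s : ℕ) (D : Finset ℕ) : Prop := ∃ a : ℕ, ∀ d ∈ D, ∃ m : ℕ, d = a + m * s

theorem Nat.ModEq.lcm {m n a b : ℕ} (hm : a ≡ b [MOD m]) (hn : a ≡ b [MOD n]) :
    a ≡ b [MOD Nat.lcm m n] := by
  rw [Nat.modEq_iff_dvd, Int.natCast_dvd] at *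
  exact Nat.lcm_dvd hm hn

lemma inAP_iff_modEq {s : ℕ} {D : Finset ℕ} : InAP s D ↔ ∀ d ∈ D, ∀ d' ∈ D, d ≡ d' [MOD s] := by
  constructor
  · rintro ⟨a, ha⟩ d hd d' hd'
    obtain ⟨m, rfl⟩ := ha d hd
    obtain ⟨m', rfl⟩ := ha d' hd'
    simp [Nat.ModEq, Nat.add_mul_mod_self_right]
  · intro h
    rcases D.eq_empty_or_nonempty with rfl | ⟨d₀, hd₀⟩
    · exact ⟨0, by simp⟩
    · refine ⟨d₀ % s, fun d hd => ⟨d / s, ?_⟩⟩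
      rw [← h d hd d₀ hd₀, mul_comm]
      exact (Nat.mod_add_div d s).symm

lemma ne_zero_of_inAP {s : ℕ} {D : Finset ℕ} (hD : 1 < D.card) (hs : InAP s D) : s ≠ 0 := by
  rintro rfl
  obtain ⟨d, hd, d', hd', hne⟩ := Finset.one_lt_card.1 hD
  exact hne (Nat.modEq_zero_iff.1 (inAP_iff_modEq.1 hs d hd d' hd'))

lemma dvd_of_inAP {s m : ℕ} {D : Finset ℕ} (hD : 1 < D.card) (hs : InAP s D)
    (hsmax : ∀ s', InAP s' D → s' ≤ s) (hm : InAP m D) : m ∣ s := by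
  have hlcm : InAP (Nat.lcm m s) D := inAP_iff_modEq.2 fun d hd d' hd' =>
    (inAP_iff_modEq.1 hm d hd d' hd').lcm (inAP_iff_modEq.1 hs d hd d' hd')
  have hlcm_eq : Nat.lcm m s = s := le_antisymm (hsmax _ hlcm) <| Nat.le_of_dvd
    (Nat.pos_of_ne_zero (ne_zero_of_inAP hD hlcm)) (Nat.dvd_lcm_right m s)
  exact hlcm_eq ▸ Nat.dvd_lcm_left m s

lemma norm_sum_lt_card_of_ne {ι V : Type*} [NormedAddCommGroup V] [NormedSpace ℝ V]
    [StrictConvexSpace ℝ V] {t : Finset ι} {z : ι → V} (hz : ∀ i ∈ t, ‖z i‖ ≤ 1) {i j : ι}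
    (hi : i ∈ t) (hj : j ∈ t) (hij : z i ≠ z j) : ‖∑ k ∈ t, z k‖ < t.card := by
  have hcard : (0 : ℝ) < t.card := by exact_mod_cast Finset.card_pos.2 ⟨i, hi⟩
  have hmean := norm_sum_lt_of_strictConvexSpace (w := fun _ => (t.card : ℝ)⁻¹)
    (fun _ _ => by positivity) (by simp [hcard.ne']) hi hj hij (by positivity) (by positivity) hz
  rw [← Finset.smul_sum, norm_smul, Real.norm_of_nonneg (by positivity)] at hmean
  rwa [inv_mul_lt_iff₀ hcard, mul_one] at hmean

lemma norm_sum_addChar_lt_card {q s : ℕ} [NeZero q] {D : Finset ℕ} (hD : 1 < D.card)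
    (hs : InAP s D) (hsmax : ∀ s', InAP s' D → s' ≤ s) (hqs : q.Coprime s)
    {ψ : AddChar (ZMod q) ℂ} (hψ : ψ ≠ 1) : ‖∑ d ∈ D, ψ d‖ < D.card := by
  by_contra hge
  apply hψ
  have hpow : ∀ n : ℕ, ψ n = ψ 1 ^ n := fun n => by
    rw [← AddChar.map_nsmul_eq_pow, nsmul_one]
  have hq : ψ 1 ^ q = 1 := by rw [← hpow, ZMod.natCast_self, AddChar.map_zero_eq_one]
  have hfin : IsOfFinOrder (ψ 1) := isOfFinOrder_iff_pow_eq_one.2 ⟨q, NeZero.pos q, hq⟩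
  have hconst : ∀ d ∈ D, ∀ d' ∈ D, d ≡ d' [MOD orderOf (ψ 1)] := by
    intro d hd d' hd'
    rw [← hfin.pow_eq_pow_iff_modEq, ← hpow, ← hpow]
    by_contra hne
    exact hge (norm_sum_lt_card_of_ne (fun x _ => (ψ.norm_apply x).le) hd hd' hne)
  have hdvd_s : orderOf (ψ 1) ∣ s := dvd_of_inAP hD hs hsmax (inAP_iff_modEq.2 hconst)
  have hψ1 : ψ 1 = 1 := orderOf_eq_one_iff.1 <|
    Nat.eq_one_of_dvd_coprimes hqs (orderOf_dvd_of_pow_eq_one hq) hdvd_s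
  ext x
  rw [← ZMod.natCast_zmod_val x, hpow, hψ1, one_pow, AddChar.one_apply]

lemma sum_range_mul_eq_sum_sum {M : Type*} [AddCommMonoid M] {c : ℕ} (hc : 0 < c)
    (g : ℕ → ℕ → M) (N : ℕ) :
    ∑ n ∈ range (c * N), g (n % c) (n / c) = ∑ j ∈ range N, ∑ i ∈ range c, g i j := by
  induction N with
  | zero => simp
  | succ N ih =>
    rw [Nat.mul_succ, sum_range_add, ih, sum_range_succ]
    congr 1
    refine sum_congr rfl fun i hi => ?_
    have hi : i < c := mem_range.1 hi
    rw [Nat.mul_add_mod, Nat.mod_eq_of_lt hi, Nat.mul_add_div hc, Nat.div_eq_of_lt hi, add_zero]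

lemma norm_sum_range_le_of_digitRec {c ε : ℕ} (hc : 0 < c) {u z : ℕ → ℂ}
    (hz : ∀ n, ‖z n‖ ≤ 1) (hrec : ∀ n, z (ε + n) = u (n % c) * z (n / c)) (M r : ℕ) :
    ‖∑ n ∈ range (ε + (c * M + r)), z n‖
      ≤ ‖∑ i ∈ range c, u i‖ * ‖∑ n ∈ range M, z n‖ + (ε + r) := by
  have hblock : ∑ n ∈ range (c * M), z (ε + n) = (∑ i ∈ range c, u i) * ∑ n ∈ range M, z n := by
    simp_rw [hrec, sum_range_mul_eq_sum_sum hc (fun i j => u i * z j), sum_mul, mul_sum]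
    exact sum_comm
  have hunit : ∀ (m : ℕ) (f : ℕ → ℕ), ‖∑ n ∈ range m, z (f n)‖ ≤ m := fun m f =>
    (norm_sum_le _ _).trans <| (sum_le_sum fun n _ => hz (f n)).trans_eq (by simp)
  rw [sum_range_add, sum_range_add, hblock]
  calc _ ≤ ‖∑ n ∈ range ε, z n‖ + (‖∑ i ∈ range c, u i‖ * ‖∑ n ∈ range M, z n‖
          + ‖∑ n ∈ range r, z (ε + (c * M + n))‖) := by
        refine (norm_add_le _ _).trans (add_le_add le_rfl ((norm_add_le _ _).trans ?_))
        rw [norm_mul]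
    _ ≤ ε + (‖∑ i ∈ range c, u i‖ * ‖∑ n ∈ range M, z n‖ + r) := by
        gcongr
        · exact hunit ε id
        · exact hunit r _
    _ = _ := by ring

lemma le_mul_geom_sum_of_le_mul_div_add {c : ℕ} {ρ K : ℝ} (hρ : 0 ≤ ρ) (hK : 0 ≤ K) {f : ℕ → ℝ}
    (hf0 : f 0 = 0) (hf : ∀ N, 0 < N → ∃ M, c * M ≤ N ∧ f N ≤ ρ * f M + K) :
    ∀ L N, N < c ^ L → f N ≤ K * ∑ j ∈ range L, ρ ^ j := by
  intro L
  induction L with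
  | zero => intro N hN; simp [Nat.lt_one_iff.1 (by simpa using hN), hf0]
  | succ L ih =>
    intro N hN
    rcases N.eq_zero_or_pos with rfl | hN0
    · rw [hf0]; positivity
    obtain ⟨M, hMN, hfN⟩ := hf N hN0
    have hM : M < c ^ L := by
      rw [pow_succ] at hN
      exact Nat.lt_of_mul_lt_mul_left (a := c) (by linarith)
    calc f N ≤ ρ * (K * ∑ j ∈ range L, ρ ^ j) + K := hfN.trans (by gcongr; exact ih M hM)
      _ = K * ∑ j ∈ range (L + 1), ρ ^ j := by rw [geom_sum_succ]; ring

lemma Nat.tendsto_log_atTop {c : ℕ} (hc : 1 < c) : Tendsto (Nat.log c) atTop atTop :=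
  tendsto_atTop_atTop.2 fun L =>
    ⟨c ^ L, fun _ hN => (Nat.log_pow hc L).symm.le.trans (Nat.log_mono_right hN)⟩

lemma tendsto_div_of_le_mul_div_add {c : ℕ} (hc : 1 < c) {ρ K : ℝ} (hρ : 0 ≤ ρ) (hρc : ρ < c)
    (hK : 0 ≤ K) {f : ℕ → ℝ} (hf_nonneg : ∀ N, 0 ≤ f N) (hf0 : f 0 = 0)
    (hf : ∀ N, 0 < N → ∃ M, c * M ≤ N ∧ f N ≤ ρ * f M + K) :
    Tendsto (fun N => f N / N) atTop (𝓝 0) := by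
  have hc0 : (0 : ℝ) < c := by positivity
  set m := max 1 ρ
  have hr : m / c < 1 := (div_lt_one hc0).2 (max_lt (by exact_mod_cast hc) hρc)
  have hg : Tendsto (fun L : ℕ => K * (((L : ℝ) + 1) * (m / c) ^ L)) atTop (𝓝 0) := by
    have h := ((tendsto_self_mul_const_pow_of_lt_one (by positivity) hr).add
      (tendsto_pow_atTop_nhds_zero_of_lt_one (by positivity) hr)).const_mul K
    simp only [add_zero, mul_zero] at h
    refine h.congr fun L => ?_
    ring
  refine squeeze_zero' (Eventually.of_forall fun N => by have := hf_nonneg N; positivity)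
    ?_ (hg.comp (Nat.tendsto_log_atTop hc))
  filter_upwards [eventually_gt_atTop 0] with N hN
  set L := Nat.log c N
  have hcL : (c : ℝ) ^ L ≤ N := by exact_mod_cast Nat.pow_log_le_self c hN.ne'
  have hgeom : ∑ j ∈ range (L + 1), ρ ^ j ≤ (L + 1) * m ^ L := by
    calc ∑ j ∈ range (L + 1), ρ ^ j ≤ ∑ j ∈ range (L + 1), m ^ L := by
          refine sum_le_sum fun j hj => ?_
          calc ρ ^ j ≤ m ^ j := pow_le_pow_left₀ hρ (le_max_right _ _) j
            _ ≤ m ^ L := pow_le_pow_right₀ (le_max_left _ _) (Nat.lt_succ_iff.1 (mem_range.1 hj))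
      _ = (L + 1) * m ^ L := by simp
  have hfN : f N ≤ K * ((L + 1) * m ^ L) :=
    (le_mul_geom_sum_of_le_mul_div_add hρ hK hf0 hf (L + 1) N
      (Nat.lt_pow_succ_log_self hc N)).trans (by gcongr)
  rw [Function.comp_apply, div_le_iff₀ (by exact_mod_cast hN), div_pow]
  calc f N ≤ K * ((L + 1) * m ^ L) := hfN
    _ = K * ((L + 1) * (m ^ L / c ^ L)) * c ^ L := by field_simp
    _ ≤ _ := by gcongr

lemma tendsto_sum_range_div_of_digitRec {c ε : ℕ} (hc : 1 < c) (hε : ε ≤ 1) {u z : ℕ → ℂ}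
    (hz : ∀ n, ‖z n‖ ≤ 1) (hrec : ∀ n, z (ε + n) = u (n % c) * z (n / c))
    (hu : ‖∑ i ∈ range c, u i‖ < c) :
    Tendsto (fun N => (∑ n ∈ range N, z n) / N) atTop (𝓝 0) := by
  rw [tendsto_zero_iff_norm_tendsto_zero]
  simp_rw [norm_div, Complex.norm_natCast]
  refine tendsto_div_of_le_mul_div_add hc (norm_nonneg _) hu (Nat.cast_nonneg c)
    (fun _ => norm_nonneg _) (by simp) fun N hN => ⟨(N - ε) / c, ?_, ?_⟩
  · exact (Nat.mul_div_le _ _).trans (Nat.sub_le N ε)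
  · have hN : N = ε + (c * ((N - ε) / c) + (N - ε) % c) := by
      rw [Nat.div_add_mod]; omega
    have hr : (((N - ε) % c : ℕ) : ℝ) + 1 ≤ c := by
      exact_mod_cast Nat.mod_lt _ (by omega)
    have hε' : (ε : ℝ) ≤ 1 := by exact_mod_cast hε
    conv_lhs => rw [hN]
    refine (norm_sum_range_le_of_digitRec (by omega) hz hrec _ _).trans ?_
    linarith

lemma natCast_card_filter_eq_sum_addChar {G : Type*} [AddCommGroup G] [Fintype G]
    [DecidableEq G] (x : ℕ → G) (a : G) (N : ℕ) :
    (#{n ∈ range N | x n = a} : ℂ)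
      = (Fintype.card G : ℂ)⁻¹ * ∑ ψ : AddChar G ℂ, ψ (-a) * ∑ n ∈ range N, ψ (x n) := by
  have hG : (Fintype.card G : ℂ) ≠ 0 := Nat.cast_ne_zero.2 Fintype.card_ne_zero
  rw [eq_inv_mul_iff_mul_eq₀ hG]
  simp_rw [mul_sum, ← AddChar.map_add_eq_mul, neg_add_eq_sub]
  rw [sum_comm]
  simp_rw [AddChar.sum_apply_eq_ite, sub_eq_zero, sum_ite, sum_const_zero, add_zero,
    sum_const, nsmul_eq_mul, mul_comm]

theorem tendsto_card_filter_div_of_tendsto_sum_addChar {G : Type*} [AddCommGroup G]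
    [Fintype G] [DecidableEq G] (x : ℕ → G)
    (hx : ∀ ψ : AddChar G ℂ, ψ ≠ 1 →
      Tendsto (fun N => (∑ n ∈ range N, ψ (x n)) / N) atTop (𝓝 0)) (a : G) :
    Tendsto (fun N => (#{n ∈ range N | x n = a} : ℝ) / N) atTop
      (𝓝 (1 / Fintype.card G)) := by
  have hterm : ∀ ψ : AddChar G ℂ, Tendsto (fun N => ψ (-a) * ((∑ n ∈ range N, ψ (x n)) / N))
      atTop (𝓝 (if ψ = 1 then 1 else 0)) := by
    intro ψ
    split_ifs with hψ
    · subst hψ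
      refine tendsto_const_nhds.congr' ?_
      filter_upwards [eventually_gt_atTop 0] with N hN
      simp [hN.ne']
    · simpa using (hx ψ hψ).const_mul (ψ (-a))
  have hsum := (tendsto_finsetSum univ fun ψ _ => hterm ψ).const_mul (Fintype.card G : ℂ)⁻¹
  rw [sum_ite_eq', if_pos (mem_univ _), mul_one] at hsum
  rw [← tendsto_ofReal_iff]
  refine (hsum.congr fun N => ?_).trans ?_
  · push_cast
    rw [natCast_card_filter_eq_sum_addChar, mul_div_assoc, sum_div]
    simp_rw [mul_div_assoc]
  · simp

def restrictedDigits (b : ℕ) (D : Finset ℕ) : Set ℕ := {m | ∀ d ∈ Nat.digits b m, d ∈ D}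

lemma Nat.digits_sum_add_mul {b x : ℕ} (hb : 1 < b) (hx : x < b) (y : ℕ) :
    (Nat.digits b (x + b * y)).sum = x + (Nat.digits b y).sum := by
  rcases eq_or_ne x 0 with rfl | hx0
  · rcases eq_or_ne y 0 with rfl | hy0
    · simp
    · rw [Nat.digits_add b hb 0 y hx (Or.inr hy0), List.sum_cons]
  · rw [Nat.digits_add b hb x y hx (Or.inl hx0), List.sum_cons]

lemma zero_mem_restrictedDigits (b : ℕ) (D : Finset ℕ) : 0 ∈ restrictedDigits b D := by
  simp [restrictedDigits]

lemma add_mul_mem_restrictedDigits_iff {b x y : ℕ} {D : Finset ℕ} (hb : 1 < b) (hx : x < b)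
    (hxy : x ≠ 0 ∨ y ≠ 0) :
    x + b * y ∈ restrictedDigits b D ↔ x ∈ D ∧ y ∈ restrictedDigits b D := by
  simp only [restrictedDigits, Set.mem_ofPred_eq, Nat.digits_add b hb x y hx hxy,
    List.forall_mem_cons]

lemma Finset.exists_strictMonoOn_bijOn (D : Finset ℕ) :
    ∃ w : ℕ → ℕ, StrictMonoOn w (Set.Iio D.card) ∧ Set.BijOn w (Set.Iio D.card) D := by
  have hcard : D.finite_toSet.toFinset.card = D.card := by simp
  refine ⟨Nat.nth (· ∈ D), hcard ▸ Nat.nth_strictMonoOn D.finite_toSet,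
    fun i hi => ?_, hcard ▸ Nat.nth_injOn D.finite_toSet, fun d hd => ?_⟩
  · exact Nat.nth_mem_of_lt_card D.finite_toSet (hcard ▸ hi)
  · obtain ⟨i, hi, rfl⟩ := Nat.exists_lt_card_finite_nth_eq D.finite_toSet hd
    exact ⟨i, hcard ▸ hi, rfl⟩

lemma Set.BijOn.sum_range_comp {M : Type*} [AddCommMonoid M] {c : ℕ} {w : ℕ → ℕ}
    {D : Finset ℕ} (hw : Set.BijOn w (Set.Iio c) D) (f : ℕ → M) :
    ∑ i ∈ Finset.range c, f (w i) = ∑ d ∈ D, f d :=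
  sum_nbij w (fun i hi => hw.mapsTo (by simpa using hi)) (by simpa using hw.injOn)
    (by simpa using hw.surjOn) fun _ _ => rfl

section Enumeration

variable {b c : ℕ} {D : Finset ℕ} {w k : ℕ → ℕ}

lemma strictMono_mod_add_mul_div (hc : 0 < c) (hw : StrictMonoOn w (Set.Iio c))
    (hwb : ∀ i < c, w i < b) (hk : StrictMono k) :
    StrictMono fun n => w (n % c) + b * k (n / c) := by
  intro n n' hnn'
  have hmod : ∀ m, m % c < c := fun m => Nat.mod_lt m hc
  rcases (Nat.div_le_div_right (c := c) hnn'.le).lt_or_eq with hdiv | hdiv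
  · calc w (n % c) + b * k (n / c) < b * (k (n / c) + 1) := by
          have := hwb _ (hmod n); rw [mul_add]; omega
      _ ≤ b * k (n' / c) := Nat.mul_le_mul_left b (hk hdiv)
      _ ≤ _ := Nat.le_add_left _ _
  · have hlt : n % c < n' % c := by
      have h1 := Nat.div_add_mod n c
      have h2 := Nat.div_add_mod n' c
      rw [hdiv] at h1
      omega
    simp only [hdiv]
    exact Nat.add_lt_add_right (hw (hmod n) (hmod n') hlt) _

lemma range_mod_add_mul_div (hb : 1 < b) (hc : 0 < c) (hDb : ∀ d ∈ D, d < b)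
    (hw : Set.BijOn w (Set.Iio c) D) (hkr : Set.range k = restrictedDigits b D) :
    Set.range (fun n => w (n % c) + b * k (n / c))
      = {m ∈ restrictedDigits b D | m ≠ 0 ∨ 0 ∈ D} := by
  ext m
  constructor
  · rintro ⟨n, rfl⟩
    have hwD : w (n % c) ∈ D := hw.mapsTo (Nat.mod_lt n hc)
    have hkC : k (n / c) ∈ restrictedDigits b D := hkr ▸ Set.mem_range_self _
    rcases eq_or_ne (w (n % c)) 0 with h0 | h0
    · refine ⟨?_, Or.inr (h0 ▸ hwD)⟩
      rcases eq_or_ne (k (n / c)) 0 with hk0 | hk0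
      · simpa [h0, hk0] using zero_mem_restrictedDigits b D
      · exact (add_mul_mem_restrictedDigits_iff hb (hDb _ hwD) (Or.inr hk0)).2 ⟨hwD, hkC⟩
    · exact ⟨(add_mul_mem_restrictedDigits_iff hb (hDb _ hwD) (Or.inl h0)).2 ⟨hwD, hkC⟩,
        Or.inl (by positivity)⟩
  · rintro ⟨hm, hm0⟩
    have hdigits : m % b ∈ D ∧ m / b ∈ restrictedDigits b D := by
      rcases eq_or_ne m 0 with rfl | hm0'
      · simpa [hm0.resolve_left (not_not.2 rfl)] using zero_mem_restrictedDigits b D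
      · rw [← add_mul_mem_restrictedDigits_iff hb (Nat.mod_lt m (by omega)), Nat.mod_add_div]
        · exact hm
        · by_contra! h
          rw [← Nat.mod_add_div m b, h.1, h.2, mul_zero] at hm0'
          exact hm0' rfl
    obtain ⟨i, hi, hwi⟩ := hw.surjOn hdigits.1
    obtain ⟨j, hj⟩ := (hkr ▸ hdigits.2 : m / b ∈ Set.range k)
    refine ⟨i + c * j, ?_⟩
    have hi : i < c := hi
    simp only [Nat.add_mul_mod_self_left, Nat.mod_eq_of_lt hi, Nat.add_mul_div_left _ _ hc,
      Nat.div_eq_of_lt hi, zero_add, hwi, hj, Nat.mod_add_div]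

theorem eq_mod_add_mul_div_of_range_eq_restrictedDigits (hb : 1 < b) (hc : 0 < c)
    (hDb : ∀ d ∈ D, d < b) (hw : StrictMonoOn w (Set.Iio c)) (hwD : Set.BijOn w (Set.Iio c) D)
    (hk : StrictMono k) (hkr : Set.range k = restrictedDigits b D) (n : ℕ) :
    k ((if 0 ∈ D then 0 else 1) + n) = w (n % c) + b * k (n / c) := by
  have hstep := strictMono_mod_add_mul_div hc hw (fun i hi => hDb _ (hwD.mapsTo hi)) hk
  refine congrFun ((StrictMono.range_inj (f := fun n => k ((if 0 ∈ D then 0 else 1) + n))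
    (hk.comp (strictMono_id.const_add _)) hstep).1 ?_) n
  rw [range_mod_add_mul_div hb hc hDb hwD hkr]
  split_ifs with h0
  · simpa [h0] using hkr
  · have hk0 : k 0 = 0 := by
      obtain ⟨j, hj⟩ := (hkr ▸ zero_mem_restrictedDigits b D : 0 ∈ Set.range k)
      have := hk.monotone (Nat.zero_le j)
      omega
    ext m
    simp only [h0, or_false, Set.mem_ofPred_eq, ← hkr]
    constructor
    · rintro ⟨n, rfl⟩
      exact ⟨Set.mem_range_self _, (hk0 ▸ hk (by omega : 0 < 1 + n)).ne'⟩
    · rintro ⟨⟨_ | n, rfl⟩, hn⟩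
      · exact absurd hk0 hn
      · exact ⟨n, by rw [add_comm]⟩

end Enumeration

theorem cantor_digitSum_uniform_mod_q_general
    (b : ℕ) (hb : 2 ≤ b) (D : Finset ℕ) (hD : 2 ≤ D.card)
    (hDsub : ∀ d ∈ D, d < b)
    (k : ℕ → ℕ) (hk : StrictMono k)
    (hkr : Set.range k = {m : ℕ | ∀ d ∈ Nat.digits b m, d ∈ D})
    (s : ℕ) (hs : InAP s D) (hsmax : ∀ s', InAP s' D → s' ≤ s)
    (q : ℕ) (hqb : Nat.Coprime q b) (hqs : Nat.Coprime q s) :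
    ∀ a : ℕ, Filter.Tendsto
      (fun N => (((Finset.range N).filter
          (fun n => (Nat.digits b (k n)).sum % q = a % q)).card : ℝ) / (N : ℝ))
      Filter.atTop (nhds (1 / (q : ℝ))) := by
  intro a
  have : NeZero q := ⟨by rintro rfl; rw [Nat.coprime_zero_left] at hqb; omega⟩
  have hc : 0 < D.card := by omega
  obtain ⟨w, hw, hwD⟩ := D.exists_strictMonoOn_bijOn
  set A : ℕ → ℕ := fun n => (Nat.digits b (k n)).sum
  have hA (n : ℕ) : A ((if 0 ∈ D then 0 else 1) + n) = w (n % D.card) + A (n / D.card) := by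
    simp only [A, eq_mod_add_mul_div_of_range_eq_restrictedDigits hb hc hDsub hw hwD hk hkr n]
    exact Nat.digits_sum_add_mul hb (hDsub _ (hwD.mapsTo (Nat.mod_lt n hc))) _
  have hweyl (ψ : AddChar (ZMod q) ℂ) (hψ : ψ ≠ 1) :
      Tendsto (fun N => (∑ n ∈ range N, ψ (A n)) / N) atTop (𝓝 0) := by
    refine tendsto_sum_range_div_of_digitRec (c := D.card) (ε := if 0 ∈ D then 0 else 1)
      (u := fun i => ψ (w i)) (by omega)
      (by split_ifs <;> simp) (fun n => (ψ.norm_apply _).le) (fun n => ?_) ?_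
    · simp only [hA, Nat.cast_add, AddChar.map_add_eq_mul]
    · rw [hwD.sum_range_comp fun d => ψ d]
      exact norm_sum_addChar_lt_card (by omega) hs hsmax hqs hψ
  simpa [ZMod.natCast_eq_natCast_iff'] using
    tendsto_card_filter_div_of_tendsto_sum_addChar (fun n => (A n : ZMod q)) hweyl a

/-- Let `(k_n)` enumerate the Cantor set `C_{b,D}` (base `b`, digits `D`,
`2 ≤ |D| ≤ b`) in increasing order, and let `s` be the largest integer such that `D`
lies in an arithmetic progression of common difference `s`. If `gcd(q,b) = 1` and
`gcd(q,s) = 1`, then `(s_b(k_n) mod q)` is asymptotically uniformly distributed: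
for every residue `a`, the proportion of `n < N` with `s_b(k_n) ≡ a (mod q)`
tends to `1/q`. -/
theorem cantor_digitSum_uniform_mod_q
    (b : ℕ) (hb : 2 ≤ b) (D : Finset ℕ) (hD : 2 ≤ D.card) (hDb : D.card ≤ b)
    (hDsub : ∀ d ∈ D, d < b)
    (k : ℕ → ℕ) (hk : StrictMono k)
    (hkr : Set.range k = {m : ℕ | ∀ d ∈ Nat.digits b m, d ∈ D})
    (s : ℕ) (hs : InAP s D) (hsmax : ∀ s', InAP s' D → s' ≤ s)
    (q : ℕ) (hqb : Nat.Coprime q b) (hqs : Nat.Coprime q s) :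
    ∀ a : ℕ, Filter.Tendsto
      (fun N => (((Finset.range N).filter
          (fun n => (Nat.digits b (k n)).sum % q = a % q)).card : ℝ) / (N : ℝ))
      Filter.atTop (nhds (1 / (q : ℝ))) :=
  cantor_digitSum_uniform_mod_q_general b hb D hD hDsub k hk hkr s hs hsmax q hqb hqs
end

section
/- Let C = C_{b,D} with 0 ∈ D, 2 ≤ |D| < b, increasing enumeration (k_n), and let s be the largest common difference of a progression containing D. If q satisfies gcd(q, b) = 1, then (k_n mod q) is asymptotically uniformly distributed on ℤ_q if and only if gcd(q, s) = 1. -/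
open Finset Filter Topology Pointwise

theorem inAP_iff_forall_dvd {s : ℕ} {D : Finset ℕ} (h0 : 0 ∈ D) :
    InAP s D ↔ ∀ d ∈ D, s ∣ d := by
  constructor
  · rintro ⟨a, ha⟩ d hd
    obtain ⟨m₀, hm₀⟩ := ha 0 h0
    obtain ⟨m, rfl⟩ := ha d hd
    exact ⟨m, by rw [show a = 0 by omega, zero_add, mul_comm]⟩
  · exact fun h => ⟨0, fun d hd => ⟨d / s, by rw [zero_add, Nat.div_mul_cancel (h d hd)]⟩⟩

theorem isGreatest_inAP_gcd {D : Finset ℕ} (h0 : 0 ∈ D) (hD : 1 < #D) :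
    IsGreatest {s | InAP s D} (D.gcd id) := by
  have hg : D.gcd id ≠ 0 := fun hg =>
    hD.not_ge (card_le_one.mpr fun a ha a' ha' => by
      simp only [Finset.gcd_eq_zero_iff, id] at hg
      rw [hg a ha, hg a' ha'])
  refine ⟨(inAP_iff_forall_dvd h0).mpr fun d hd => gcd_dvd hd, fun s hs => ?_⟩
  exact Nat.le_of_dvd (Nat.pos_of_ne_zero hg) (dvd_gcd ((inAP_iff_forall_dvd h0).mp hs))

theorem coprime_of_tendsto_card_filter_mod {k : ℕ → ℕ} {q s : ℕ} (hq : q ≠ 0)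
    (hks : ∀ n, s ∣ k n)
    (h : Tendsto (fun N => (#((range N).filter fun n => k n % q = 1 % q) : ℝ) / N) atTop
      (𝓝 (1 / q))) :
    q.Coprime s := by
  by_contra hqs
  have hnever : ∀ n, k n % q ≠ 1 % q := fun n hn => by
    have hdvd : q.gcd s ∣ k n % q := (Nat.dvd_mod_iff (q.gcd_dvd_left s)).mpr
      ((q.gcd_dvd_right s).trans (hks n))
    rw [hn, Nat.dvd_mod_iff (q.gcd_dvd_left s)] at hdvd
    exact hqs (Nat.dvd_one.mp hdvd)
  simp only [filter_false_of_mem fun n _ => hnever n, card_empty, Nat.cast_zero, zero_div] at h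
  exact one_div_ne_zero (Nat.cast_ne_zero.mpr hq) (tendsto_nhds_unique h tendsto_const_nhds)

theorem image_range_of_strictMono {k : ℕ → ℕ} (hk : StrictMono k) {p : ℕ → Prop}
    [DecidablePred p] (hkp : Set.range k = {m | p m}) (N : ℕ) :
    (range N).image k = (range (k N)).filter p := by
  ext m
  have hm : p m ↔ m ∈ Set.range k := by rw [hkp]; rfl
  simp only [mem_image, mem_range, mem_filter, hm]
  constructor
  · rintro ⟨n, hn, rfl⟩
    exact ⟨hk hn, n, rfl⟩
  · rintro ⟨hm, n, rfl⟩
    exact ⟨n, hk.lt_iff_lt.mp hm, rfl⟩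

theorem AddSubgroup.natCast_finsetGcd_mem {R : Type*} [Ring R] (H : AddSubgroup R) {D : Finset ℕ}
    (hD : ∀ d ∈ D, (d : R) ∈ H) : ((D.gcd id : ℕ) : R) ∈ H := by
  classical
  induction D using Finset.induction_on with
  | empty => simp [H.zero_mem]
  | insert a D ha ih =>
    rw [gcd_insert, id, ← Int.cast_natCast,
      show GCDMonoid.gcd a (D.gcd id) = Nat.gcd a (D.gcd id) from rfl, Nat.gcd_eq_gcd_ab]
    push_cast
    rw [← Int.cast_comm, ← Int.cast_comm, ← zsmul_eq_mul, ← zsmul_eq_mul]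
    exact H.add_mem (H.zsmul_mem (hD a (mem_insert_self a D)) _)
      (H.zsmul_mem (ih fun d hd => hD d (mem_insert_of_mem hd)) _)

theorem ZMod.addSubgroup_eq_top_of_isUnit_mem {q : ℕ} [NeZero q] (H : AddSubgroup (ZMod q))
    {u : ZMod q} (hu : IsUnit u) (huH : u ∈ H) : H = ⊤ := by
  refine eq_top_iff.mpr fun x _ => ?_
  have hx : x = ((x * ↑hu.unit⁻¹ : ZMod q).val : ZMod q) * u := by
    rw [ZMod.natCast_zmod_val, mul_assoc, IsUnit.val_inv_mul, mul_one]
  rw [hx, ← nsmul_eq_mul]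
  exact H.nsmul_mem huH _

theorem ZMod.closure_natCast_eq_top {q : ℕ} [NeZero q] {D : Finset ℕ}
    (hqD : q.Coprime (D.gcd id)) :
    AddSubgroup.closure (Nat.cast '' (D : Set ℕ) : Set (ZMod q)) = ⊤ :=
  ZMod.addSubgroup_eq_top_of_isUnit_mem _ ((ZMod.isUnit_iff_coprime _ q).mpr hqD.symm)
    (AddSubgroup.natCast_finsetGcd_mem _ fun d hd => AddSubgroup.subset_closure ⟨d, hd, rfl⟩)

theorem Finset.eq_univ_of_forall_add_mul_mem {R : Type*} [Ring R] [Fintype R] [DecidableEq R]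
    {S : Finset R} (hS : S.Nonempty) {A : Set R} (h0A : 0 ∈ A) (hA : AddSubgroup.closure A = ⊤)
    {β : R} (hβ : IsUnit β) (hSA : ∀ a ∈ A, ∀ u ∈ S, a + β * u ∈ S) : S = univ := by
  have hmul : S.image (β * ·) = S :=
    eq_of_subset_of_card_le (fun x hx => by
      obtain ⟨u, hu, rfl⟩ := mem_image.mp hx
      simpa using hSA 0 h0A u hu) (card_image_of_injective _ hβ.mul_right_injective).ge
  have hstab : AddSubgroup.closure A ≤ AddAction.stabilizer R S := by
    refine (AddSubgroup.closure_le _).mpr fun a ha => AddAction.mem_stabilizer_iff.mpr ?_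
    refine eq_of_subset_of_card_le (fun x hx => ?_) (card_vadd_finset a S).ge
    obtain ⟨u, hu, rfl⟩ := mem_vadd_finset.mp hx
    rw [← hmul] at hu
    obtain ⟨v, hv, rfl⟩ := mem_image.mp hu
    exact hSA a ha v hv
  obtain ⟨s, hs⟩ := hS
  refine eq_univ_of_forall fun x => ?_
  have hx : (x - s) +ᵥ S = S :=
    AddAction.mem_stabilizer_iff.mp (hstab (hA ▸ AddSubgroup.mem_top (x - s)))
  rw [← hx]
  exact mem_vadd_finset.mpr ⟨s, hs, by simp⟩

theorem abs_sum_comp_le_of_surjOn {ι α : Type*} [Fintype α] {B : Finset ι} {π : ι → α}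
    (hπ : Set.SurjOn π B Set.univ) {g : α → ℝ} (hg : ∑ a, g a = 0) {M : ℝ}
    (hM : ∀ a, |g a| ≤ M) : |∑ i ∈ B, g (π i)| ≤ (#B - Fintype.card α) * M := by
  classical
  choose σ hσB hσ using fun a => hπ (Set.mem_univ a)
  have hσinj : Function.Injective σ := fun a a' h => by rw [← hσ a, ← hσ a', h]
  have hT : univ.image σ ⊆ B := fun i hi => by
    obtain ⟨a, -, rfl⟩ := mem_image.mp hi
    exact hσB a
  have hsection : ∑ i ∈ univ.image σ, g (π i) = 0 := by
    rw [sum_image fun a _ a' _ h => hσinj h]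
    simpa only [hσ] using hg
  have hcard : (#(B \ univ.image σ) : ℝ) = #B - Fintype.card α := by
    rw [card_sdiff_of_subset hT, Nat.cast_sub (card_le_card hT),
      card_image_of_injective _ hσinj, card_univ]
  rw [← sum_sdiff hT, hsection, add_zero, ← hcard]
  calc |∑ i ∈ B \ univ.image σ, g (π i)| ≤ ∑ i ∈ B \ univ.image σ, |g (π i)| :=
        abs_sum_le_sum_abs _ _
    _ ≤ #(B \ univ.image σ) * M := by
        simpa using sum_le_card_nsmul _ _ M fun i _ => hM (π i)

theorem tendsto_zero_of_antitone_of_le_mul {γ : ℕ → ℝ} (hγ : Antitone γ) (hγ0 : ∀ j, 0 ≤ γ j)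
    {L : ℕ} (hL : 0 < L) {β : ℝ} (hβ0 : 0 ≤ β) (hβ1 : β < 1)
    (hstep : ∀ j, γ (j + L) ≤ β * γ j) : Tendsto γ atTop (𝓝 0) := by
  have hiter : ∀ i, γ (i * L) ≤ β ^ i * γ 0 := by
    intro i
    induction i with
    | zero => simp
    | succ i ih =>
      calc γ ((i + 1) * L) = γ (i * L + L) := by rw [add_mul, one_mul]
        _ ≤ β * γ (i * L) := hstep _
        _ ≤ β * (β ^ i * γ 0) := by gcongr
        _ = β ^ (i + 1) * γ 0 := by ring
  have hlim : Tendsto (fun j => β ^ (j / L) * γ 0) atTop (𝓝 0) := by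
    simpa using ((tendsto_pow_atTop_nhds_zero_of_lt_one hβ0 hβ1).comp
      (Nat.tendsto_div_const_atTop hL.ne')).mul_const (γ 0)
  refine squeeze_zero hγ0 (fun j => ?_) hlim
  exact (hγ (Nat.div_mul_le_self j L)).trans (hiter (j / L))

theorem tendsto_sum_range_div_pow {c : ℝ} (hc : 1 < c) {f : ℕ → ℝ}
    (hf : Tendsto (fun j => f j / c ^ j) atTop (𝓝 0)) :
    Tendsto (fun n => (∑ j ∈ range n, f j) / c ^ n) atTop (𝓝 0) := by
  have hc0 : 0 < c := by linarith
  have hfo : f =o[atTop] (c ^ ·) :=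
    (Asymptotics.isLittleO_iff_tendsto' (.of_forall fun j h => absurd h (by positivity))).mpr hf
  have hsum : (fun n => ∑ j ∈ range n, f j) =o[atTop] fun n => ∑ j ∈ range n, c ^ j := by
    refine hfo.sum_range (fun j => by positivity) (tendsto_atTop_mono (fun n => ?_)
      tendsto_natCast_atTop_atTop)
    simpa using card_nsmul_le_sum (range n) (c ^ ·) 1 fun j _ => one_le_pow₀ hc.le
  have hgeom : (fun n => ∑ j ∈ range n, c ^ j) =O[atTop] (c ^ ·) := by
    refine Asymptotics.IsBigO.of_bound (c - 1)⁻¹ (.of_forall fun n => ?_)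
    rw [Real.norm_of_nonneg (by positivity), Real.norm_of_nonneg (by positivity),
      geom_sum_eq hc.ne', div_eq_inv_mul]
    gcongr
    linarith
  exact (hsum.trans_isBigO hgeom).tendsto_div_nhds_zero

namespace CantorDigits

def cantorBelow (b : ℕ) (D : Finset ℕ) (X : ℕ) : Finset ℕ :=
  (range X).filter fun m => ∀ d ∈ Nat.digits b m, d ∈ D

variable {b : ℕ} {D : Finset ℕ}

theorem gcd_dvd_of_forall_mem_digits {m : ℕ} (hm : ∀ d ∈ Nat.digits b m, d ∈ D) :
    D.gcd id ∣ m := by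
  rw [← Nat.ofDigits_digits b m]
  generalize Nat.digits b m = L at hm
  induction L with
  | nil => simp
  | cons d L ih =>
    simp only [List.mem_cons, forall_eq_or_imp] at hm
    rw [Nat.ofDigits_cons]
    exact dvd_add (Finset.gcd_dvd hm.1) ((ih hm.2).mul_left b)

theorem cantorBelow_mono {X Y : ℕ} (h : X ≤ Y) : cantorBelow b D X ⊆ cantorBelow b D Y :=
  filter_subset_filter _ (range_subset_range.mpr h)

theorem cantorBelow_eq_filter {X Y : ℕ} (h : X ≤ Y) :
    cantorBelow b D X = (cantorBelow b D Y).filter (· < X) := by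
  ext m
  simp only [cantorBelow, mem_filter, mem_range]
  constructor
  · exact fun ⟨hX, hD⟩ => ⟨⟨hX.trans_le h, hD⟩, hX⟩
  · exact fun ⟨⟨_, hD⟩, hX⟩ => ⟨hX, hD⟩

theorem cantorBelow_pow_zero : cantorBelow b D (b ^ 0) = {0} := by
  ext m
  simp only [cantorBelow, pow_zero, mem_filter, mem_range, Nat.lt_one_iff, mem_singleton]
  exact ⟨And.left, by rintro rfl; simp⟩

section
variable (hb : 2 ≤ b) (h0 : 0 ∈ D)
include hb h0

theorem mem_cantorBelow_pow_succ {j m : ℕ} :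
    m ∈ cantorBelow b D (b ^ (j + 1)) ↔ m % b ∈ D ∧ m / b ∈ cantorBelow b D (b ^ j) := by
  have hdigits : (∀ d ∈ Nat.digits b m, d ∈ D) ↔
      m % b ∈ D ∧ ∀ d ∈ Nat.digits b (m / b), d ∈ D := by
    rcases Nat.eq_zero_or_pos m with rfl | hm
    · simp [h0]
    · simp [Nat.digits_def' hb hm]
  simp only [cantorBelow, mem_filter, mem_range, hdigits, pow_succ,
    Nat.div_lt_iff_lt_mul (by omega : 0 < b)]
  tauto

theorem mem_cantorBelow_pow_add {j t m : ℕ} :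
    m ∈ cantorBelow b D (b ^ (j + t)) ↔
      m % b ^ j ∈ cantorBelow b D (b ^ j) ∧ m / b ^ j ∈ cantorBelow b D (b ^ t) := by
  induction j generalizing m with
  | zero => simp [cantorBelow, Nat.mod_one]
  | succ j ih =>
    rw [show j + 1 + t = j + t + 1 by omega, mem_cantorBelow_pow_succ hb h0, ih,
      mem_cantorBelow_pow_succ hb h0, pow_succ', Nat.mod_mul_right_div_self,
      Nat.mod_mul_right_mod, Nat.div_div_eq_div_mul]
    tauto

theorem cantorBelow_self (hDsub : ∀ d ∈ D, d < b) : cantorBelow b D b = D := by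
  ext m
  rw [show cantorBelow b D b = cantorBelow b D (b ^ (0 + 1)) by simp,
    mem_cantorBelow_pow_succ hb h0, cantorBelow_pow_zero,
    mem_singleton, Nat.div_eq_zero_iff_lt (by omega)]
  constructor
  · rintro ⟨hm, hmb⟩
    rwa [Nat.mod_eq_of_lt hmb] at hm
  · intro hm
    have hmb := hDsub m hm
    exact ⟨by rwa [Nat.mod_eq_of_lt hmb], hmb⟩

theorem add_pow_mul_mem_cantorBelow {j t lo hi : ℕ} (hlo : lo ∈ cantorBelow b D (b ^ j))
    (hhi : hi ∈ cantorBelow b D (b ^ t)) : lo + b ^ j * hi ∈ cantorBelow b D (b ^ (j + t)) := by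
  have hlt : lo < b ^ j := mem_range.mp (mem_filter.mp hlo).1
  have hbj : 0 < b ^ j := by positivity
  rwa [mem_cantorBelow_pow_add hb h0, Nat.add_mul_mod_self_left, Nat.mod_eq_of_lt hlt,
    Nat.add_mul_div_left _ _ hbj, Nat.div_eq_of_lt hlt, zero_add, and_iff_right hlo]

theorem sum_cantorBelow_pow_add {M : Type*} [AddCommMonoid M] (j t : ℕ) (f : ℕ → M) :
    ∑ m ∈ cantorBelow b D (b ^ (j + t)), f m =
      ∑ p ∈ cantorBelow b D (b ^ j) ×ˢ cantorBelow b D (b ^ t), f (p.1 + b ^ j * p.2) := by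
  have hbj : 0 < b ^ j := by positivity
  refine sum_nbij' (fun m => (m % b ^ j, m / b ^ j)) (fun p => p.1 + b ^ j * p.2) ?_ ?_ ?_ ?_ ?_
  · intro m hm
    simpa [mem_product] using (mem_cantorBelow_pow_add hb h0).mp hm
  · intro p hp
    exact add_pow_mul_mem_cantorBelow hb h0 (mem_product.mp hp).1 (mem_product.mp hp).2
  · intro m _
    exact Nat.mod_add_div m (b ^ j)
  · intro p hp
    have hlt : p.1 < b ^ j := mem_range.mp (mem_filter.mp (mem_product.mp hp).1).1
    simp only [Nat.add_mul_mod_self_left, Nat.mod_eq_of_lt hlt, Nat.add_mul_div_left _ _ hbj,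
      Nat.div_eq_of_lt hlt, zero_add]
  · intro m _
    rw [Nat.mod_add_div]

theorem card_cantorBelow_pow (hDsub : ∀ d ∈ D, d < b) (j : ℕ) :
    #(cantorBelow b D (b ^ j)) = #D ^ j := by
  induction j with
  | zero => rw [cantorBelow_pow_zero, card_singleton, pow_zero]
  | succ j ih =>
    have h := sum_cantorBelow_pow_add hb h0 j 1 fun _ => 1
    simp only [sum_const, smul_eq_mul, mul_one, card_product] at h
    rw [h, ih, pow_one, cantorBelow_self hb h0 hDsub, pow_succ]

theorem sum_cantorBelow_add {M : Type*} [AddCommMonoid M] (hDsub : ∀ d ∈ D, d < b)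
    {L xh r : ℕ} (hxh : xh < b) (hr : r < b ^ L) (f : ℕ → M) :
    ∑ m ∈ cantorBelow b D (b ^ L * xh + r), f m =
      ∑ h ∈ D.filter (· < xh), ∑ v ∈ cantorBelow b D (b ^ L), f (v + b ^ L * h) +
        if xh ∈ D then ∑ v ∈ cantorBelow b D r, f (v + b ^ L * xh) else 0 := by
  have hX : b ^ L * xh + r ≤ b ^ (L + 1) := by
    rw [pow_succ]; nlinarith
  rw [cantorBelow_eq_filter hX, sum_filter, sum_cantorBelow_pow_add hb h0 L 1, pow_one,
    cantorBelow_self hb h0 hDsub, sum_product_right]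
  have hinner : ∀ h ∈ D, ∑ v ∈ cantorBelow b D (b ^ L),
      (if v + b ^ L * h < b ^ L * xh + r then f (v + b ^ L * h) else 0) =
        (if h < xh then ∑ v ∈ cantorBelow b D (b ^ L), f (v + b ^ L * h) else 0) +
          if h = xh then ∑ v ∈ cantorBelow b D r, f (v + b ^ L * h) else 0 := by
    intro h _
    have hv : ∀ v ∈ cantorBelow b D (b ^ L), v < b ^ L := fun v hv =>
      mem_range.mp (mem_filter.mp hv).1
    rcases lt_trichotomy h xh with hlt | rfl | hgt
    · have hmul := Nat.mul_le_mul_left (b ^ L) hlt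
      rw [if_pos hlt, if_neg hlt.ne, add_zero]
      refine sum_congr rfl fun v hvL => if_pos ?_
      have := hv v hvL
      rw [Nat.mul_succ] at hmul
      omega
    · rw [if_neg (lt_irrefl h), if_pos rfl, zero_add, cantorBelow_eq_filter hr.le, sum_filter]
      exact sum_congr rfl fun v _ => by simp only [add_comm v, Nat.add_lt_add_iff_left]
    · have hmul := Nat.mul_le_mul_left (b ^ L) hgt
      rw [if_neg (lt_asymm hgt), if_neg hgt.ne', add_zero]
      refine sum_eq_zero fun v hvL => if_neg ?_
      rw [Nat.mul_succ] at hmul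
      omega
  rw [sum_congr rfl hinner, sum_add_distrib, ← sum_filter, sum_ite_eq']

end

section Discrepancy

variable (b D) (q : ℕ)

noncomputable def disc (X : ℕ) (w : ZMod q) : ℝ :=
  ∑ m ∈ cantorBelow b D X, ((if (m : ZMod q) = w then 1 else 0) - (q : ℝ)⁻¹)

variable {b D q}

theorem disc_eq (X : ℕ) (w : ZMod q) :
    disc b D q X w = #((cantorBelow b D X).filter fun m : ℕ => (m : ZMod q) = w) -
      #(cantorBelow b D X) / (q : ℝ) := by
  rw [disc, sum_sub_distrib, sum_boole, sum_const, nsmul_eq_mul, div_eq_mul_inv]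

theorem disc_zero (w : ZMod q) : disc b D q 0 w = 0 := by
  simp [disc, cantorBelow]

private theorem indicator_add_pow_mul (w : ZMod q) (L v h : ℕ) :
    ((if ((v + b ^ L * h : ℕ) : ZMod q) = w then 1 else 0) - (q : ℝ)⁻¹) =
      (if (v : ZMod q) = w - b ^ L * h then 1 else 0) - (q : ℝ)⁻¹ := by
  push_cast
  simp only [eq_sub_iff_add_eq]

section
variable (hb : 2 ≤ b) (h0 : 0 ∈ D)
include hb h0

theorem disc_pow_add (j t : ℕ) (w : ZMod q) :
    disc b D q (b ^ (j + t)) w =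
      ∑ hi ∈ cantorBelow b D (b ^ t), disc b D q (b ^ j) (w - b ^ j * hi) := by
  rw [disc, sum_cantorBelow_pow_add hb h0, sum_product_right]
  simp only [indicator_add_pow_mul, disc]

theorem disc_add (hDsub : ∀ d ∈ D, d < b) {L xh r : ℕ} (hxh : xh < b) (hr : r < b ^ L)
    (w : ZMod q) :
    disc b D q (b ^ L * xh + r) w =
      ∑ h ∈ D.filter (· < xh), disc b D q (b ^ L) (w - b ^ L * h) +
        if xh ∈ D then disc b D q r (w - b ^ L * xh) else 0 := by
  rw [disc, sum_cantorBelow_add hb h0 hDsub hxh hr]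
  simp only [indicator_add_pow_mul, disc]

end

variable [NeZero q]

theorem sum_disc (X : ℕ) : ∑ w : ZMod q, disc b D q X w = 0 := by
  simp only [disc]
  rw [sum_comm]
  refine sum_eq_zero fun m _ => ?_
  rw [sum_sub_distrib, sum_ite_eq, if_pos (mem_univ _), sum_const, card_univ, ZMod.card,
    nsmul_eq_mul, mul_inv_cancel₀ (Nat.cast_ne_zero.mpr (NeZero.ne q)), sub_self]

variable (b D q) in
noncomputable def maxDisc (j : ℕ) : ℝ :=
  univ.sup' univ_nonempty fun w : ZMod q => |disc b D q (b ^ j) w|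

theorem abs_disc_le_maxDisc (j : ℕ) (w : ZMod q) : |disc b D q (b ^ j) w| ≤ maxDisc b D q j :=
  le_sup' (fun w : ZMod q => |disc b D q (b ^ j) w|) (mem_univ w)

theorem maxDisc_nonneg (j : ℕ) : 0 ≤ maxDisc b D q j :=
  (abs_nonneg _).trans (abs_disc_le_maxDisc j 0)

end Discrepancy

section
variable {q : ℕ} [NeZero q] (hb : 2 ≤ b) (h0 : 0 ∈ D) (hDsub : ∀ d ∈ D, d < b)
include hb h0 hDsub

theorem maxDisc_succ_le (j : ℕ) : maxDisc b D q (j + 1) ≤ #D * maxDisc b D q j := by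
  refine sup'_le _ _ fun w _ => ?_
  rw [disc_pow_add hb h0 j 1, pow_one, cantorBelow_self hb h0 hDsub]
  calc _ ≤ ∑ hi ∈ D, |disc b D q (b ^ j) (w - (b : ZMod q) ^ j * (hi : ZMod q))| :=
        abs_sum_le_sum_abs _ _
    _ ≤ #D * maxDisc b D q j := by
      simpa using sum_le_card_nsmul D _ _ fun hi _ => abs_disc_le_maxDisc j _

theorem maxDisc_add_le (hqb : q.Coprime b) {L : ℕ}
    (hL : Set.SurjOn (fun m : ℕ => (m : ZMod q)) (cantorBelow b D (b ^ L)) Set.univ) (j : ℕ) :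
    maxDisc b D q (j + L) ≤ (#D ^ L - q) * maxDisc b D q j := by
  refine sup'_le _ _ fun w _ => ?_
  rw [disc_pow_add hb h0 j L]
  have hunit : IsUnit ((b : ZMod q) ^ j) := ((ZMod.isUnit_iff_coprime b q).mpr hqb.symm).pow j
  have hsurj : Set.SurjOn (fun hi : ℕ => w - (b : ZMod q) ^ j * hi)
      (cantorBelow b D (b ^ L)) Set.univ := by
    intro u _
    obtain ⟨m, hm, hmu⟩ := hL (Set.mem_univ (↑hunit.unit⁻¹ * (w - u)))
    refine ⟨m, hm, ?_⟩
    simp only at hmu ⊢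
    rw [hmu, ← mul_assoc, hunit.mul_val_inv, one_mul, sub_sub_cancel]
  have := abs_sum_comp_le_of_surjOn hsurj (sum_disc (D := D) (b ^ j))
    (abs_disc_le_maxDisc (D := D) j)
  rwa [card_cantorBelow_pow hb h0 hDsub, ZMod.card, Nat.cast_pow] at this

theorem exists_surjOn_natCast (hqb : q.Coprime b) (hqs : q.Coprime (D.gcd id)) :
    ∃ L, 0 < L ∧ Set.SurjOn (fun m : ℕ => (m : ZMod q)) (cantorBelow b D (b ^ L)) Set.univ := by
  let S : ℕ →o Finset (ZMod q) :=
    ⟨fun t => (cantorBelow b D (b ^ t)).image (↑),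
      fun s t hst => image_subset_image (cantorBelow_mono (Nat.pow_le_pow_right (by omega) hst))⟩
  obtain ⟨t, ht⟩ := WellFoundedGT.monotone_chain_condition S
  have huniv : S (t + 1) = univ := by
    have hS0 : (0 : ZMod q) ∈ S (t + 1) :=
      mem_image.mpr ⟨0, mem_filter.mpr ⟨mem_range.mpr (by positivity), by simp⟩, Nat.cast_zero⟩
    have h0D : (0 : ZMod q) ∈ (Nat.cast '' (D : Set ℕ) : Set (ZMod q)) := ⟨0, h0, Nat.cast_zero⟩
    refine eq_univ_of_forall_add_mul_mem ⟨0, hS0⟩ h0D (ZMod.closure_natCast_eq_top hqs)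
      ((ZMod.isUnit_iff_coprime b q).mpr hqb.symm) ?_
    rintro _ ⟨d, hd, rfl⟩ _ hu
    obtain ⟨m, hm, rfl⟩ := mem_image.mp hu
    have hd : d ∈ cantorBelow b D (b ^ 1) := by rwa [pow_one, cantorBelow_self hb h0 hDsub]
    rw [← ht (t + 1) (by omega), ht (1 + (t + 1)) (by omega)]
    exact mem_image.mpr
      ⟨d + b ^ 1 * m, add_pow_mul_mem_cantorBelow hb h0 hd hm, by push_cast; ring⟩
  refine ⟨t + 1, t.succ_pos, fun u _ => ?_⟩
  obtain ⟨m, hm, rfl⟩ := mem_image.mp (huniv ▸ mem_univ u)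
  exact ⟨m, hm, rfl⟩

theorem tendsto_maxDisc_div_pow (hqb : q.Coprime b) (hqs : q.Coprime (D.gcd id)) :
    Tendsto (fun j => maxDisc b D q j / (#D : ℝ) ^ j) atTop (𝓝 0) := by
  obtain ⟨L, hL, hsurj⟩ := exists_surjOn_natCast hb h0 hDsub hqb hqs
  have hc : (0 : ℝ) < #D := Nat.cast_pos.mpr (card_pos.mpr ⟨0, h0⟩)
  have hq : (0 : ℝ) < q := Nat.cast_pos.mpr (Nat.pos_of_ne_zero (NeZero.ne q))
  have hqL : (q : ℝ) ≤ #D ^ L := by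
    have := card_le_card_of_surjOn (s := cantorBelow b D (b ^ L)) (t := (univ : Finset (ZMod q)))
      _ (by rwa [coe_univ])
    rw [card_univ, ZMod.card, card_cantorBelow_pow hb h0 hDsub] at this
    exact_mod_cast this
  refine tendsto_zero_of_antitone_of_le_mul (antitone_nat_of_succ_le fun j => ?_)
    (fun j => div_nonneg (maxDisc_nonneg j) (by positivity)) hL
    (β := (#D ^ L - q) / #D ^ L) (div_nonneg (by linarith) (by positivity))
    ((div_lt_one (by positivity)).mpr (by linarith)) fun j => ?_
  · calc maxDisc b D q (j + 1) / (#D : ℝ) ^ (j + 1)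
        ≤ #D * maxDisc b D q j / (#D : ℝ) ^ (j + 1) := by
          gcongr; exact maxDisc_succ_le hb h0 hDsub j
      _ = maxDisc b D q j / (#D : ℝ) ^ j := by rw [pow_succ]; field_simp
  · calc maxDisc b D q (j + L) / (#D : ℝ) ^ (j + L)
        ≤ (#D ^ L - q) * maxDisc b D q j / (#D : ℝ) ^ (j + L) := by
          gcongr; exact maxDisc_add_le hb h0 hDsub hqb hsurj j
      _ = _ := by rw [pow_add]; field_simp

theorem abs_disc_le_sum_maxDisc (L : ℕ) :
    ∀ X < b ^ L, ∀ w : ZMod q, |disc b D q X w| ≤ #D * ∑ j ∈ range L, maxDisc b D q j := by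
  induction L with
  | zero =>
    intro X hX w
    obtain rfl : X = 0 := by simpa using hX
    simp [disc_zero]
  | succ L ih =>
    intro X hX w
    have hbL : 0 < b ^ L := by positivity
    have hxh : X / b ^ L < b := Nat.div_lt_of_lt_mul (by rwa [← pow_succ])
    have hr : X % b ^ L < b ^ L := Nat.mod_lt X hbL
    have hfull :
        |∑ h ∈ D.filter (· < X / b ^ L), disc b D q (b ^ L) (w - (b : ZMod q) ^ L * h)| ≤
          #D * maxDisc b D q L := by
      refine (abs_sum_le_sum_abs _ _).trans ((sum_le_card_nsmul _ _ _ fun h _ =>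
        abs_disc_le_maxDisc L _).trans ?_)
      rw [nsmul_eq_mul]
      gcongr
      · exact maxDisc_nonneg L
      · exact filter_subset _ _
    have hpart : |if X / b ^ L ∈ D then
        disc b D q (X % b ^ L) (w - (b : ZMod q) ^ L * (X / b ^ L : ℕ)) else 0| ≤
        #D * ∑ j ∈ range L, maxDisc b D q j := by
      split_ifs
      · exact ih _ hr _
      · rw [abs_zero]
        exact mul_nonneg (Nat.cast_nonneg _) (sum_nonneg fun j _ => maxDisc_nonneg j)
    rw [← Nat.div_add_mod X (b ^ L), disc_add hb h0 hDsub hxh hr, sum_range_succ, mul_add]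
    exact (abs_add_le _ _).trans (by linarith)

theorem tendsto_disc_div_card (hD : 1 < #D) (hqb : q.Coprime b) (hqs : q.Coprime (D.gcd id))
    (w : ZMod q) :
    Tendsto (fun X => disc b D q X w / #(cantorBelow b D X)) atTop (𝓝 0) := by
  have hc : (1 : ℝ) < #D := by exact_mod_cast hD
  have hlog : Tendsto (fun X => Nat.log b X + 1) atTop atTop :=
    (tendsto_add_atTop_nat 1).comp <| tendsto_atTop_atTop.mpr fun M =>
      ⟨b ^ M, fun X hX => Nat.le_log_of_pow_le (by omega) hX⟩
  have hlim := ((tendsto_sum_range_div_pow hc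
    (tendsto_maxDisc_div_pow hb h0 hDsub hqb hqs)).comp hlog).const_mul ((#D : ℝ) * #D)
  rw [mul_zero] at hlim
  refine squeeze_zero_norm' ?_ hlim
  filter_upwards [eventually_ne_atTop 0] with X hX
  have hdisc := abs_disc_le_sum_maxDisc hb h0 hDsub (Nat.log b X + 1) X
    (Nat.lt_pow_succ_log_self (by omega) X) w
  have hcard : (#D : ℝ) ^ Nat.log b X ≤ #(cantorBelow b D X) := by
    rw [← Nat.cast_pow, ← card_cantorBelow_pow hb h0 hDsub, Nat.cast_le]
    exact card_le_card (cantorBelow_mono (Nat.pow_log_le_self b hX))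
  have hpos : (0 : ℝ) < (#D : ℝ) ^ Nat.log b X := by positivity
  calc ‖disc b D q X w / #(cantorBelow b D X)‖
      = |disc b D q X w| / #(cantorBelow b D X) := by rw [norm_div, Real.norm_eq_abs,
        Real.norm_natCast]
    _ ≤ (#D * ∑ j ∈ range (Nat.log b X + 1), maxDisc b D q j) / (#D : ℝ) ^ Nat.log b X :=
        div_le_div₀ ((abs_nonneg _).trans hdisc) hdisc hpos hcard
    _ = _ := by simp only [Function.comp, pow_succ]; field_simp

end

theorem card_cantorBelow_apply {k : ℕ → ℕ} (hk : StrictMono k)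
    (hkr : Set.range k = {m | ∀ d ∈ Nat.digits b m, d ∈ D}) (N : ℕ) :
    #(cantorBelow b D (k N)) = N := by
  rw [cantorBelow, ← image_range_of_strictMono hk hkr, card_image_of_injective _ hk.injective,
    card_range]

theorem card_filter_mod_eq {k : ℕ → ℕ} (hk : StrictMono k)
    (hkr : Set.range k = {m | ∀ d ∈ Nat.digits b m, d ∈ D}) (q a N : ℕ) :
    #((range N).filter fun n => k n % q = a % q) =
      #((cantorBelow b D (k N)).filter fun m : ℕ => (m : ZMod q) = a) := by
  rw [cantorBelow, ← image_range_of_strictMono hk hkr, filter_image,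
    card_image_of_injective _ hk.injective]
  simp only [ZMod.natCast_eq_natCast_iff']

theorem tendsto_card_filter_mod_div {k : ℕ → ℕ} (hk : StrictMono k)
    (hkr : Set.range k = {m | ∀ d ∈ Nat.digits b m, d ∈ D}) (hb : 2 ≤ b) (h0 : 0 ∈ D)
    (hDsub : ∀ d ∈ D, d < b) (hD : 1 < #D) {q : ℕ} [NeZero q] (hqb : q.Coprime b)
    (hqs : q.Coprime (D.gcd id)) (a : ℕ) :
    Tendsto (fun N => (#((range N).filter fun n => k n % q = a % q) : ℝ) / N) atTop
      (𝓝 (1 / q)) := by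
  have h := ((tendsto_disc_div_card hb h0 hDsub hD hqb hqs a).comp hk.tendsto_atTop).add_const
    (1 / q : ℝ)
  rw [zero_add] at h
  refine h.congr' ((eventually_ne_atTop 0).mono fun N hN => ?_)
  simp only [Function.comp, disc_eq, card_cantorBelow_apply hk hkr, card_filter_mod_eq hk hkr]
  field_simp
  ring

end CantorDigits

open CantorDigits in
theorem cantor_uniform_mod_q_iff_general
    (b : ℕ) (hb : 3 ≤ b) (D : Finset ℕ) (hD : 2 ≤ D.card)
    (hDsub : ∀ d ∈ D, d < b) (h0 : 0 ∈ D)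
    (k : ℕ → ℕ) (hk : StrictMono k)
    (hkr : Set.range k = {m : ℕ | ∀ d ∈ Nat.digits b m, d ∈ D})
    (s : ℕ) (hs : InAP s D) (hsmax : ∀ s', InAP s' D → s' ≤ s)
    (q : ℕ) (hqb : Nat.Coprime q b) :
    (∀ a : ℕ, Filter.Tendsto
        (fun N => (((Finset.range N).filter (fun n => k n % q = a % q)).card : ℝ) / (N : ℝ))
        Filter.atTop (nhds (1 / (q : ℝ))))
      ↔ Nat.Coprime q s := by
  have hq : q ≠ 0 := by
    rintro rfl
    rw [Nat.coprime_zero_left] at hqb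
    omega
  have : NeZero q := ⟨hq⟩
  obtain rfl : s = D.gcd id :=
    IsGreatest.unique ⟨hs, fun s' h => hsmax s' h⟩ (isGreatest_inAP_gcd h0 hD)
  constructor
  · exact fun h => coprime_of_tendsto_card_filter_mod hq
      (fun n => gcd_dvd_of_forall_mem_digits (hkr.subset ⟨n, rfl⟩)) (h 1)
  · exact tendsto_card_filter_mod_div hk hkr (by omega) h0 hDsub hD hqb

/-- Let `(k_n)` enumerate the Cantor set `C_{b,D}` (with `0 ∈ D`,
`2 ≤ |D| < b`) in increasing order, and let `s` be the largest common difference of a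
progression containing `D`. If `gcd(q,b) = 1`, then `(k_n mod q)` is asymptotically
uniformly distributed on `ℤ_q` if and only if `gcd(q,s) = 1`. -/
theorem cantor_uniform_mod_q_iff
    (b : ℕ) (hb : 3 ≤ b) (D : Finset ℕ) (hD : 2 ≤ D.card) (hDb : D.card < b)
    (hDsub : ∀ d ∈ D, d < b) (h0 : 0 ∈ D)
    (k : ℕ → ℕ) (hk : StrictMono k)
    (hkr : Set.range k = {m : ℕ | ∀ d ∈ Nat.digits b m, d ∈ D})
    (s : ℕ) (hs : InAP s D) (hsmax : ∀ s', InAP s' D → s' ≤ s)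
    (q : ℕ) (hqb : Nat.Coprime q b) :
    (∀ a : ℕ, Filter.Tendsto
        (fun N => (((Finset.range N).filter (fun n => k n % q = a % q)).card : ℝ) / (N : ℝ))
        Filter.atTop (nhds (1 / (q : ℝ))))
      ↔ Nat.Coprime q s :=
  cantor_uniform_mod_q_iff_general b hb D hD hDsub h0 k hk hkr s hs hsmax q hqb
end
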